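/- arXiv:2109.07313 — 9 statements merged into one kernel-verified Lean document; each statement's English description precedes it below -/
import Mathlib

section
/- For every instance with n ≥ 2 agents, a finite set M of m ≥ n+1 indivisible chores, and additive nonnegative cost functions, there exists an (m−n)-EFX allocation; that is, an allocation X = (X_1,…,X_n) such that for all agents i, j and every item e ∈ X_i it holds that c_i(X_i \ {e}) ≤ (m−n)·c_i(X_j). -/
open Finset

/-- There is a subset of size `k` containing the `k` largest elements w.r.t. `w`. -/
lemma top_subset_aux {ι : Type*} [DecidableEq ι] (M : Finset ι) (w : ι → ℝ) :
    ∀ k, k ≤ M.card → ∃ T, T ⊆ M ∧ T.card = k ∧ ∀ a ∈ T, ∀ b ∈ M \ T, w b ≤ w a := by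
  intro k
  induction k with
  | zero => intro _; exact ⟨∅, empty_subset _, rfl, by simp⟩
  | succ k ih =>
    intro hk
    obtain ⟨T, hTM, hTc, hTp⟩ := ih (Nat.le_of_succ_le hk)
    have hne : (M \ T).Nonempty := by
      rw [← card_pos, card_sdiff_of_subset hTM, hTc]; omega
    obtain ⟨b, hb, hbmax⟩ := exists_max_image (M \ T) w hne
    refine ⟨insert b T, insert_subset (mem_sdiff.mp hb).1 hTM, ?_, ?_⟩
    · rw [card_insert_of_notMem (mem_sdiff.mp hb).2, hTc]
    · intro a ha x hx
      have hx' : x ∈ M \ T := by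
        rw [mem_sdiff] at hx ⊢
        exact ⟨hx.1, fun h => hx.2 (mem_insert_of_mem h)⟩
      rcases mem_insert.mp ha with h | h
      · exact h ▸ hbmax x hx'
      · exact hTp a h x hx'

/-- For every instance with `n ≥ 2` agents, a finite set `M` of `m ≥ n+1` indivisible
chores, and additive nonnegative cost functions, there exists an `(m-n)`-EFX allocation. -/
theorem stmt_0 {ι : Type*} [DecidableEq ι] (n m : ℕ) (hn : 2 ≤ n) (hm : n + 1 ≤ m)
    (M : Finset ι) (hM : M.card = m)
    (c : Fin n → ι → ℝ) (hc : ∀ i, ∀ e ∈ M, 0 ≤ c i e) :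
    ∃ X : Fin n → Finset ι,
      (∀ i j, i ≠ j → Disjoint (X i) (X j)) ∧
      (Finset.univ.biUnion X = M) ∧
      (∀ i j : Fin n, ∀ e ∈ X i,
        ∑ f ∈ (X i).erase e, c i f ≤ ((m : ℝ) - (n : ℝ)) * ∑ f ∈ X j, c i f) := by
  set i0 : Fin n := ⟨0, by omega⟩ with hi0def
  obtain ⟨T, hTM, hTc, hTp⟩ := top_subset_aux M (c i0) (n - 1) (by omega)
  -- enumeration of T
  set σ : Fin (n - 1) → ι := fun j => ((T.equivFin.symm (Fin.cast hTc.symm j)) : ι) with hσ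
  have hσT : ∀ j, σ j ∈ T := fun j => (T.equivFin.symm _).2
  have hσinj : Function.Injective σ := by
    intro a b hab
    have h1 : T.equivFin.symm (Fin.cast hTc.symm a) = T.equivFin.symm (Fin.cast hTc.symm b) :=
      Subtype.coe_injective hab
    have h2 := T.equivFin.symm.injective h1
    simpa [Fin.ext_iff] using congrArg Fin.val h2
  have hσsurj : ∀ x ∈ T, ∃ j, σ j = x := by
    intro x hx
    refine ⟨Fin.cast hTc (T.equivFin ⟨x, hx⟩), ?_⟩
    simp [hσ]
  set X : Fin n → Finset ι := fun i =>
    if h : (i : ℕ) = 0 then M \ T else {σ ⟨(i : ℕ) - 1, by have := i.isLt; omega⟩} with hX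
  have hXsub : ∀ i, X i ⊆ M := by
    intro i
    by_cases h : (i : ℕ) = 0
    · simp only [hX, h, dif_pos]; exact sdiff_subset
    · simp only [hX, h, dif_neg, not_false_iff]
      exact singleton_subset_iff.mpr (hTM (hσT _))
  refine ⟨X, ?_, ?_, ?_⟩
  · -- disjoint
    intro i j hij
    by_cases hi : (i : ℕ) = 0 <;> by_cases hj : (j : ℕ) = 0
    · exact absurd (Fin.ext (hi.trans hj.symm)) hij
    · simp only [hX, hi, hj, dif_pos, dif_neg, not_false_iff]
      exact disjoint_singleton_right.mpr (fun h => (mem_sdiff.mp h).2 (hσT _))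
    · simp only [hX, hi, hj, dif_pos, dif_neg, not_false_iff]
      exact disjoint_singleton_left.mpr (fun h => (mem_sdiff.mp h).2 (hσT _))
    · simp only [hX, hi, hj, dif_neg, not_false_iff]
      rw [disjoint_singleton_left, mem_singleton]
      intro h
      have h2 := hσinj h
      have h3 : (i : ℕ) - 1 = (j : ℕ) - 1 := congrArg Fin.val h2
      exact hij (Fin.ext (by omega))
  · -- union
    apply Subset.antisymm
    · exact biUnion_subset.mpr (fun i _ => hXsub i)
    · intro x hx
      rw [mem_biUnion]
      by_cases hxT : x ∈ T
      · obtain ⟨j, hj⟩ := hσsurj x hxT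
        have hjlt : (j : ℕ) + 1 < n := by have := j.isLt; omega
        refine ⟨⟨(j : ℕ) + 1, hjlt⟩, mem_univ _, ?_⟩
        have hne0 : (((⟨(j : ℕ) + 1, hjlt⟩ : Fin n) : ℕ)) ≠ 0 := Nat.succ_ne_zero _
        simp only [hX, dif_neg hne0, mem_singleton]
        rw [← hj]
        congr 1
      · exact ⟨i0, mem_univ _, by
          simp only [hX, hi0def, dif_pos, mem_sdiff]
          exact ⟨hx, hxT⟩⟩
  · -- EFX
    intro i j e he
    have hRHSnn : 0 ≤ ∑ f ∈ X j, c i f :=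
      Finset.sum_nonneg (fun f hf => hc i f (hXsub j hf))
    have hmn : (1 : ℝ) ≤ (m : ℝ) - (n : ℝ) := by
      have : (n : ℝ) + 1 ≤ (m : ℝ) := by exact_mod_cast hm
      linarith
    by_cases hi : (i : ℕ) = 0
    · -- i = i0 : bundle M \ T
      have hXi : X i = M \ T := by simp only [hX, hi, dif_pos]
      rw [hXi] at he ⊢
      by_cases hj : (j : ℕ) = 0
      · have hXj : X j = M \ T := by simp only [hX, hj, dif_pos]
        rw [hXj]
        have h1 : ∑ f ∈ (M \ T).erase e, c i f ≤ ∑ f ∈ M \ T, c i f :=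
          sum_le_sum_of_subset_of_nonneg (erase_subset _ _)
            (fun f hf _ => hc i f (sdiff_subset hf))
        have h2 : 0 ≤ ∑ f ∈ M \ T, c i f :=
          Finset.sum_nonneg (fun f hf => hc i f (sdiff_subset hf))
        calc ∑ f ∈ (M \ T).erase e, c i f ≤ ∑ f ∈ M \ T, c i f := h1
          _ ≤ ((m : ℝ) - (n : ℝ)) * ∑ f ∈ M \ T, c i f := le_mul_of_one_le_left h2 hmn
      · -- j gets a singleton from T
        have hXj : X j = {σ ⟨(j : ℕ) - 1, by have := j.isLt; omega⟩} := by
          simp only [hX, hj, dif_neg, not_false_iff]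
        set x := σ ⟨(j : ℕ) - 1, by have := j.isLt; omega⟩ with hxdef
        have hxT : x ∈ T := hσT _
        have hcard : ((M \ T).erase e).card = m - n := by
          rw [card_erase_of_mem he, card_sdiff_of_subset hTM, hM, hTc]; omega
        have hceq : c i = c i0 := congrArg c (Fin.ext hi)
        have hbound : ∀ f ∈ (M \ T).erase e, c i f ≤ c i x := by
          intro f hf
          rw [hceq]
          exact hTp x hxT f (erase_subset _ _ hf)
        have h1 : ∑ f ∈ (M \ T).erase e, c i f ≤ ((M \ T).erase e).card • c i x :=
          Finset.sum_le_card_nsmul _ _ _ hbound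
        rw [hcard] at h1
        have hcast : ((m - n : ℕ) : ℝ) = (m : ℝ) - (n : ℝ) := by
          rw [Nat.cast_sub (by omega)]
        rw [nsmul_eq_mul, hcast] at h1
        rw [hXj]
        simpa using h1
    · -- i ≠ 0 : singleton bundle, erase gives ∅
      have hXi : X i = {σ ⟨(i : ℕ) - 1, by have := i.isLt; omega⟩} := by
        simp only [hX, hi, dif_neg, not_false_iff]
      rw [hXi] at he
      rw [hXi, mem_singleton.mp he, erase_singleton, sum_empty]
      exact mul_nonneg (by linarith) hRHSnn
end

section
/- Let there be n ≥ 2 agents and m ≥ n indivisible chores with additive nonnegative cost functions, and let α ≥ 1. If there exists an agent i such that c_i(M_i^-) ≤ α·c_i(σ_i(n−1)), then an α-EFX allocation exists; in particular, the allocation that gives each of the n−1 items σ_i(1),…,σ_i(n−1) to a distinct agent other than i and gives M_i^- to agent i is α-EFX. -/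
open Finset

/-- Let there be `n ≥ 2` agents and `m ≥ n` chores with additive nonnegative costs,
and `α ≥ 1`.  Here `σ i` enumerates `M` from most to least costly under `c i`
(0-indexed, so the paper's `σ_i(k)` is `σ i (k-1)`), and `M_i^- = M` minus the
`n-1` most costly items under `c i`.  If `c_i(M_i^-) ≤ α · c_i(σ_i(n-1))`, then the
allocation giving each of the `n-1` items `σ_i(1), …, σ_i(n-1)` to a distinct agent
other than `i` and giving `M_i^-` to agent `i` is `α`-EFX. -/
theorem stmt_2 {ι : Type*} [DecidableEq ι] (n m : ℕ) (hn : 2 ≤ n) (hmn : n ≤ m)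
    (M : Finset ι) (hM : M.card = m)
    (c : Fin n → ι → ℝ) (hc : ∀ i, ∀ e ∈ M, 0 ≤ c i e)
    (σ : Fin n → ℕ → ι)
    (hσmem : ∀ i, ∀ k < m, σ i k ∈ M)
    (hσinj : ∀ i, ∀ k < m, ∀ l < m, σ i k = σ i l → k = l)
    (hσmono : ∀ i, ∀ k l, k ≤ l → l < m → c i (σ i l) ≤ c i (σ i k))
    (α : ℝ) (hα : 1 ≤ α)
    (i : Fin n)
    (hi : ∑ e ∈ M \ (Finset.image (σ i) (Finset.range (n - 1))), c i e
            ≤ α * c i (σ i (n - 2)))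
    (X : Fin n → Finset ι)
    (hXi : X i = M \ (Finset.image (σ i) (Finset.range (n - 1))))
    (π : Fin n → ℕ)
    (hπlt : ∀ j, j ≠ i → π j < n - 1)
    (hπinj : ∀ j k, j ≠ i → k ≠ i → π j = π k → j = k)
    (hXj : ∀ j, j ≠ i → X j = {σ i (π j)}) :
    ∀ j k : Fin n, ∀ e ∈ X j,
      ∑ f ∈ (X j).erase e, c j f ≤ α * ∑ f ∈ X k, c j f := by
  have hα0 : (0:ℝ) ≤ α := le_trans zero_le_one hα
  have hXsub : ∀ k : Fin n, X k ⊆ M := by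
    intro k
    by_cases hk : k = i
    · subst hk; rw [hXi]; exact sdiff_subset
    · rw [hXj k hk]
      intro x hx
      rw [mem_singleton] at hx
      subst hx
      exact hσmem i (π k) (lt_of_lt_of_le (hπlt k hk) (le_trans (Nat.sub_le n 1) hmn))
  have hsum_nonneg : ∀ (j k : Fin n), 0 ≤ ∑ f ∈ X k, c j f := fun j k =>
    Finset.sum_nonneg fun f hf => hc j f (hXsub k hf)
  intro j k e he
  by_cases hj : i = j
  · subst hj
    have h1 : ∑ f ∈ (X i).erase e, c i f ≤ ∑ f ∈ X i, c i f := by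
      apply Finset.sum_le_sum_of_subset_of_nonneg (erase_subset e (X i))
      intro f hf _
      exact hc i f (hXsub i hf)
    by_cases hk : k = i
    · subst hk
      calc ∑ f ∈ (X k).erase e, c k f ≤ ∑ f ∈ X k, c k f := h1
        _ ≤ α * ∑ f ∈ X k, c k f := le_mul_of_one_le_left (hsum_nonneg k k) hα
    · have h2 : ∑ f ∈ X i, c i f ≤ α * c i (σ i (n - 2)) := by rw [hXi]; exact hi
      have hπk : π k ≤ n - 2 := Nat.le_sub_one_of_lt (hπlt k hk)
      have hmono := hσmono i (π k) (n - 2) hπk (lt_of_lt_of_le (Nat.sub_lt (by omega) (by omega)) hmn)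
      have hs : ∑ f ∈ X k, c i f = c i (σ i (π k)) := by
        rw [hXj k hk, sum_singleton]
      rw [hs]
      calc ∑ f ∈ (X i).erase e, c i f ≤ α * c i (σ i (n - 2)) := le_trans h1 h2
        _ ≤ α * c i (σ i (π k)) := by nlinarith
  · have hXjj : X j = {σ i (π j)} := hXj j (fun h => hj h.symm)
    rw [hXjj] at he ⊢
    rw [mem_singleton] at he
    subst he
    rw [Finset.erase_singleton, Finset.sum_empty]
    exact mul_nonneg hα0 (hsum_nonneg j k)
end

section
/- Let there be 3 agents and a finite set M of indivisible chores with additive nonnegative cost functions normalized so that c_i(M) = 1 for every agent i. If agents 1 and 2 are small agents, i.e., c_1(e) < 1/8 and c_2(e) < 1/8 for every item e ∈ M, then there exists a 3-partition (S_1, S_2, S_3) of M such that for both i ∈ {1,2} and all j ∈ {1,2,3}, 1/8 ≤ c_i(S_j) ≤ 5/8. -/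
open Finset

lemma split2 {ι : Type*} [DecidableEq ι] (x y : ι → ℝ) :
    ∀ (n : ℕ) (S : Finset ι), S.card ≤ n →
      ∀ m : ℝ, 0 ≤ m → (∀ e ∈ S, 0 ≤ x e ∧ x e ≤ m) →
      (∀ e ∈ S, 0 ≤ y e ∧ y e ≤ 1/8) →
      ∃ A B : Finset ι, Disjoint A B ∧ A ∪ B = S ∧
        |∑ e ∈ A, x e - ∑ e ∈ B, x e| ≤ m ∧
        |∑ e ∈ A, y e - ∑ e ∈ B, y e| ≤ 1/8 := by
  intro n
  induction n with
  | zero =>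
      intro S hcard m hm hx hy
      have hS : S = ∅ := Finset.card_eq_zero.mp (Nat.le_zero.mp hcard)
      subst hS
      exact ⟨∅, ∅, Finset.disjoint_empty_left _, by simp, by simpa using hm, by norm_num⟩
  | succ n ih =>
      intro S hcard m hm hx hy
      rcases S.eq_empty_or_nonempty with rfl | hne
      · exact ⟨∅, ∅, Finset.disjoint_empty_left _, by simp, by simpa using hm, by norm_num⟩
      obtain ⟨e1, he1, hmax1⟩ := S.exists_max_image x hne
      rcases (S.erase e1).eq_empty_or_nonempty with hS' | hne'
      · -- S = {e1}
        have hS : S = {e1} := by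
          have h := (Finset.insert_erase he1).symm
          rw [hS'] at h
          simpa using h
        subst hS
        have h1 := hx e1 (Finset.mem_singleton_self e1)
        have h2 := hy e1 (Finset.mem_singleton_self e1)
        refine ⟨{e1}, ∅, Finset.disjoint_empty_right _, by simp, ?_, ?_⟩
        · rw [Finset.sum_singleton, Finset.sum_empty, sub_zero, abs_of_nonneg h1.1]
          exact h1.2
        · rw [Finset.sum_singleton, Finset.sum_empty, sub_zero, abs_of_nonneg h2.1]
          exact h2.2
      obtain ⟨e2, he2, hmax2⟩ := (S.erase e1).exists_max_image x hne'
      set S'' := (S.erase e1).erase e2 with hS''def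
      have he2S : e2 ∈ S := Finset.mem_of_mem_erase he2
      have h21 : e2 ≠ e1 := Finset.ne_of_mem_erase he2
      have hcard2 : S''.card ≤ n := by
        have h1 : (S.erase e1).card = S.card - 1 := Finset.card_erase_of_mem he1
        have h2 : S''.card = (S.erase e1).card - 1 := Finset.card_erase_of_mem he2
        have h3 : 1 ≤ S.card := Finset.card_pos.mpr hne
        omega
      have hx2 := hx e2 he2S
      obtain ⟨A, B, hdis, hun, hxAB, hyAB⟩ :=
        ih S'' hcard2 (x e2) hx2.1
          (fun e he => ⟨(hx e (Finset.mem_of_mem_erase (Finset.mem_of_mem_erase he))).1,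
                        hmax2 e (Finset.mem_of_mem_erase he)⟩)
          (fun e he => hy e (Finset.mem_of_mem_erase (Finset.mem_of_mem_erase he)))
      have he1S'' : e1 ∉ S'' := by
        intro h
        exact (Finset.notMem_erase e1 S) (Finset.mem_of_mem_erase h)
      have he2S'' : e2 ∉ S'' := Finset.notMem_erase e2 _
      have hins : insert e1 (insert e2 S'') = S := by
        rw [hS''def, Finset.insert_erase he2, Finset.insert_erase he1]
      have hx21 : x e2 ≤ x e1 := hmax1 e2 he2S
      have hx1m : x e1 ≤ m := (hx e1 he1).2
      have hy1 := hy e1 he1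
      have hy2 := hy e2 he2S
      obtain ⟨a, b, hne_ab, haS'', hbS'', hinsab, hya, hyb, hyba, hxab⟩ :
          ∃ a b : ι, a ≠ b ∧ a ∉ S'' ∧ b ∉ S'' ∧ insert a (insert b S'') = S ∧
            (0 ≤ y a ∧ y a ≤ 1/8) ∧ (0 ≤ y b ∧ y b ≤ 1/8) ∧ y b ≤ y a ∧
            |x a - x b| ≤ x e1 - x e2 := by
        rcases le_total (y e2) (y e1) with h | h
        · exact ⟨e1, e2, fun h' => h21 h'.symm, he1S'', he2S'', hins, hy1, hy2, h,
            le_of_eq (abs_of_nonneg (by linarith))⟩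
        · refine ⟨e2, e1, h21, he2S'', he1S'', ?_, hy2, hy1, h, ?_⟩
          · rw [Finset.insert_comm]; exact hins
          · rw [abs_sub_comm]; exact le_of_eq (abs_of_nonneg (by linarith))
      have haA : a ∉ A := fun h => haS'' (hun ▸ Finset.mem_union_left _ h)
      have haB : a ∉ B := fun h => haS'' (hun ▸ Finset.mem_union_right _ h)
      have hbA : b ∉ A := fun h => hbS'' (hun ▸ Finset.mem_union_left _ h)
      have hbB : b ∉ B := fun h => hbS'' (hun ▸ Finset.mem_union_right _ h)
      rw [abs_le] at hxAB hyAB hxab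
      rcases le_total (∑ e ∈ A, y e) (∑ e ∈ B, y e) with hg | hg
      · refine ⟨insert a A, insert b B, ?_, ?_, ?_, ?_⟩
        · refine Finset.disjoint_insert_left.mpr ⟨?_, Finset.disjoint_insert_right.mpr ⟨hbA, hdis⟩⟩
          simp [Finset.mem_insert, hne_ab, haB]
        · rw [Finset.insert_union, Finset.union_insert, hun]
          exact hinsab
        · rw [Finset.sum_insert haA, Finset.sum_insert hbB, abs_le]
          constructor <;> linarith [hxAB.1, hxAB.2, hxab.1, hxab.2]
        · rw [Finset.sum_insert haA, Finset.sum_insert hbB, abs_le]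
          constructor <;> linarith [hya.1, hya.2, hyb.1, hyb.2, hyAB.1, hyAB.2]
      · refine ⟨insert b A, insert a B, ?_, ?_, ?_, ?_⟩
        · refine Finset.disjoint_insert_left.mpr ⟨?_, Finset.disjoint_insert_right.mpr ⟨haA, hdis⟩⟩
          simp [Finset.mem_insert, hne_ab.symm, hbB]
        · rw [Finset.insert_union, Finset.union_insert, hun, Finset.insert_comm]
          exact hinsab
        · rw [Finset.sum_insert hbA, Finset.sum_insert haB, abs_le]
          constructor <;> linarith [hxAB.1, hxAB.2, hxab.1, hxab.2]
        · rw [Finset.sum_insert hbA, Finset.sum_insert haB, abs_le]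
          constructor <;> linarith [hya.1, hya.2, hyb.1, hyb.2, hyAB.1, hyAB.2]

/-- 3 agents, additive nonnegative cost functions normalized to `c_i(M) = 1`.
If agents 1 and 2 (indices `0` and `1`) are small agents (every item costs them
less than `1/8`), then there is a 3-partition `(S_1, S_2, S_3)` of `M` such that
for both `i ∈ {1,2}` and all `j`, `1/8 ≤ c_i(S_j) ≤ 5/8`. -/
theorem stmt_3 {ι : Type*} [DecidableEq ι] (M : Finset ι)
    (c : Fin 3 → ι → ℝ) (hc : ∀ i, ∀ e ∈ M, 0 ≤ c i e)
    (hnorm : ∀ i, ∑ e ∈ M, c i e = 1)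
    (hsmall : ∀ e ∈ M, c 0 e < 1 / 8 ∧ c 1 e < 1 / 8) :
    ∃ S : Fin 3 → Finset ι,
      (∀ j k, j ≠ k → Disjoint (S j) (S k)) ∧
      (Finset.univ.biUnion S = M) ∧
      (∀ i : Fin 3, i ≠ 2 → ∀ j : Fin 3,
        1 / 8 ≤ ∑ e ∈ S j, c i e ∧ ∑ e ∈ S j, c i e ≤ 5 / 8) := by
  have hx : ∀ e ∈ M, 0 ≤ c 0 e ∧ c 0 e ≤ 1/8 :=
    fun e he => ⟨hc 0 e he, le_of_lt (hsmall e he).1⟩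
  have hy : ∀ e ∈ M, 0 ≤ c 1 e ∧ c 1 e ≤ 1/8 :=
    fun e he => ⟨hc 1 e he, le_of_lt (hsmall e he).2⟩
  obtain ⟨A, B, hABd, hABu, hABx, hABy⟩ :=
    split2 (c 0) (c 1) M.card M le_rfl (1/8) (by norm_num) hx hy
  have hAM : A ⊆ M := hABu ▸ Finset.subset_union_left
  obtain ⟨A1, A2, hA12d, hA12u, hA12x, hA12y⟩ :=
    split2 (c 0) (c 1) A.card A le_rfl (1/8) (by norm_num)
      (fun e he => hx e (hAM he)) (fun e he => hy e (hAM he))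
  have hA1A : A1 ⊆ A := hA12u ▸ Finset.subset_union_left
  have hA2A : A2 ⊆ A := hA12u ▸ Finset.subset_union_right
  have hsum0 : ∑ e ∈ A, c 0 e + ∑ e ∈ B, c 0 e = 1 := by
    rw [← Finset.sum_union hABd, hABu]; exact hnorm 0
  have hsum1 : ∑ e ∈ A, c 1 e + ∑ e ∈ B, c 1 e = 1 := by
    rw [← Finset.sum_union hABd, hABu]; exact hnorm 1
  have hsA0 : ∑ e ∈ A1, c 0 e + ∑ e ∈ A2, c 0 e = ∑ e ∈ A, c 0 e := by
    rw [← Finset.sum_union hA12d, hA12u]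
  have hsA1 : ∑ e ∈ A1, c 1 e + ∑ e ∈ A2, c 1 e = ∑ e ∈ A, c 1 e := by
    rw [← Finset.sum_union hA12d, hA12u]
  rw [abs_le] at hABx hABy hA12x hA12y
  obtain ⟨hABx1, hABx2⟩ := hABx
  obtain ⟨hABy1, hABy2⟩ := hABy
  obtain ⟨hA12x1, hA12x2⟩ := hA12x
  obtain ⟨hA12y1, hA12y2⟩ := hA12y
  refine ⟨![A1, A2, B], ?_, ?_, ?_⟩
  · intro j k hjk
    have hd1 : Disjoint A1 B := Finset.disjoint_of_subset_left hA1A hABd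
    have hd2 : Disjoint A2 B := Finset.disjoint_of_subset_left hA2A hABd
    fin_cases j <;> fin_cases k <;>
      simp_all [hA12d, hA12d.symm, hd1, hd1.symm, hd2, hd2.symm]
  · have huniv : (Finset.univ : Finset (Fin 3)) = {0, 1, 2} := by decide
    rw [huniv, Finset.biUnion_insert, Finset.biUnion_insert, Finset.singleton_biUnion]
    show A1 ∪ (A2 ∪ B) = M
    rw [← Finset.union_assoc, hA12u, hABu]
  · intro i hi j
    fin_cases i
    · fin_cases j
      · exact ⟨by show (1:ℝ)/8 ≤ ∑ e ∈ A1, c 0 e; linarith,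
               by show ∑ e ∈ A1, c 0 e ≤ (5:ℝ)/8; linarith⟩
      · exact ⟨by show (1:ℝ)/8 ≤ ∑ e ∈ A2, c 0 e; linarith,
               by show ∑ e ∈ A2, c 0 e ≤ (5:ℝ)/8; linarith⟩
      · exact ⟨by show (1:ℝ)/8 ≤ ∑ e ∈ B, c 0 e; linarith,
               by show ∑ e ∈ B, c 0 e ≤ (5:ℝ)/8; linarith⟩
    · fin_cases j
      · exact ⟨by show (1:ℝ)/8 ≤ ∑ e ∈ A1, c 1 e; linarith,
               by show ∑ e ∈ A1, c 1 e ≤ (5:ℝ)/8; linarith⟩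
      · exact ⟨by show (1:ℝ)/8 ≤ ∑ e ∈ A2, c 1 e; linarith,
               by show ∑ e ∈ A2, c 1 e ≤ (5:ℝ)/8; linarith⟩
      · exact ⟨by show (1:ℝ)/8 ≤ ∑ e ∈ B, c 1 e; linarith,
               by show ∑ e ∈ B, c 1 e ≤ (5:ℝ)/8; linarith⟩
    · exact absurd rfl hi
end

section
/- Let there be 3 agents and a finite set M of indivisible chores with additive nonnegative cost functions normalized so that c_i(M) = 1 for every agent i, and assume c_i(M_i^-) > 5·c_i(σ_i(2)) for every agent i. If agents 1 and 2 are large (c_1(σ_1(1)) ≥ 1/8 and c_2(σ_2(1)) ≥ 1/8) and agent 3 is small (c_3(e) < 1/8 for every item e ∈ M), then there exists a 4-EFX allocation. -/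
open Finset

private lemma abs_helper {x d γ : ℝ} (hx : |x| ≤ γ) (hd : |d| ≤ γ) :
    |x + d| ≤ γ ∨ |x - d| ≤ γ := by
  rcases abs_le.mp hx with ⟨hx1, hx2⟩
  rcases abs_le.mp hd with ⟨hd1, hd2⟩
  rcases le_total x 0 with h1 | h1 <;> rcases le_total d 0 with h2 | h2
  · right; rw [abs_le]; constructor <;> linarith
  · left; rw [abs_le]; constructor <;> linarith
  · left; rw [abs_le]; constructor <;> linarith
  · right; rw [abs_le]; constructor <;> linarith

/-- Split a finite set into two halves `A`, `B` so that the `g`-weights of the halves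
differ by at most the max item weight `γ`, while each half captures at least
`(h(S) - β)/2` of the `h`-weight (`β` a pointwise bound on `h`).
Construction: pair items in `h`-descending order (so each half gets one item of each
pair), and orient each pair greedily with respect to `g`. -/
private lemma split_lemma {ι : Type*} [DecidableEq ι] (g h : ι → ℝ) (γ : ℝ) (hγ : 0 ≤ γ) :
    ∀ (n : ℕ) (S : Finset ι), S.card ≤ n →
      (∀ e ∈ S, 0 ≤ g e) → (∀ e ∈ S, g e ≤ γ) → (∀ e ∈ S, 0 ≤ h e) →
      ∀ β : ℝ, 0 ≤ β → (∀ e ∈ S, h e ≤ β) →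
      ∃ A B : Finset ι, A ∪ B = S ∧ Disjoint A B ∧
        |(∑ e ∈ A, g e) - ∑ e ∈ B, g e| ≤ γ ∧
        ((∑ e ∈ S, h e) - β) / 2 ≤ ∑ e ∈ A, h e ∧
        ((∑ e ∈ S, h e) - β) / 2 ≤ ∑ e ∈ B, h e := by
  intro n
  induction n with
  | zero =>
    intro S hcard _ _ _ β hβ _
    have hS : S = ∅ := Finset.card_eq_zero.mp (Nat.le_zero.mp hcard)
    subst hS
    refine ⟨∅, ∅, by simp, by simp, ?_, ?_, ?_⟩
    · simpa using hγ
    · simp; linarith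
    · simp; linarith
  | succ n ih =>
    intro S hcard hg0 hgγ hh0 β hβ hhβ
    rcases S.eq_empty_or_nonempty with rfl | hSne
    · refine ⟨∅, ∅, by simp, by simp, ?_, ?_, ?_⟩
      · simpa using hγ
      · simp; linarith
      · simp; linarith
    by_cases hc1 : S.card = 1
    · obtain ⟨a, rfl⟩ := Finset.card_eq_one.mp hc1
      have ha := Finset.mem_singleton_self a
      refine ⟨{a}, ∅, by simp, by simp, ?_, ?_, ?_⟩
      · rw [Finset.sum_singleton, Finset.sum_empty, sub_zero, abs_le]
        exact ⟨by linarith [hg0 a ha], hgγ a ha⟩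
      · rw [Finset.sum_singleton]
        linarith [hh0 a ha, hhβ a ha]
      · rw [Finset.sum_singleton, Finset.sum_empty]
        linarith [hh0 a ha, hhβ a ha]
    · obtain ⟨u, hu, humax⟩ := S.exists_max_image h hSne
      have hcS : 1 ≤ S.card := Finset.card_pos.mpr hSne
      have hSuNe : (S.erase u).Nonempty := by
        rw [← Finset.card_pos, Finset.card_erase_of_mem hu]
        omega
      obtain ⟨v, hv, hvmax⟩ := (S.erase u).exists_max_image h hSuNe
      have hvS : v ∈ S := Finset.mem_of_mem_erase hv
      have hvu : v ≠ u := Finset.ne_of_mem_erase hv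
      set S' : Finset ι := (S.erase u).erase v with hS'def
      have hS'S : S' ⊆ S := (Finset.erase_subset _ _).trans (Finset.erase_subset _ _)
      have huS' : u ∉ S' := fun hmem => Finset.notMem_erase u S (Finset.mem_of_mem_erase hmem)
      have hvS' : v ∉ S' := Finset.notMem_erase v _
      have hcard' : S'.card ≤ n := by
        have e2 : S'.card = (S.erase u).card - 1 := Finset.card_erase_of_mem hv
        have e1 : (S.erase u).card = S.card - 1 := Finset.card_erase_of_mem hu
        omega
      obtain ⟨A', B', hu', hd', habs', hhA', hhB'⟩ :=
        ih S' hcard' (fun e he => hg0 e (hS'S he)) (fun e he => hgγ e (hS'S he))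
          (fun e he => hh0 e (hS'S he)) (h v) (hh0 v hvS)
          (fun e he => hvmax e (Finset.mem_of_mem_erase he))
      have hA'S' : A' ⊆ S' := hu' ▸ Finset.subset_union_left
      have hB'S' : B' ⊆ S' := hu' ▸ Finset.subset_union_right
      have huA' : u ∉ A' := fun h' => huS' (hA'S' h')
      have huB' : u ∉ B' := fun h' => huS' (hB'S' h')
      have hvA' : v ∉ A' := fun h' => hvS' (hA'S' h')
      have hvB' : v ∉ B' := fun h' => hvS' (hB'S' h')
      have hrecon : insert u (insert v S') = S := by
        rw [hS'def, Finset.insert_erase hv, Finset.insert_erase hu]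
      have huvS' : u ∉ insert v S' := by
        simp only [Finset.mem_insert]
        push_neg
        exact ⟨hvu.symm, huS'⟩
      have hsumS : ∀ F : ι → ℝ, (∑ e ∈ S, F e) = F u + (F v + ∑ e ∈ S', F e) := by
        intro F
        rw [← hrecon, Finset.sum_insert huvS', Finset.sum_insert hvS']
      have hdabs : |g u - g v| ≤ γ := by
        rw [abs_le]
        exact ⟨by linarith [hg0 u hu, hgγ v hvS], by linarith [hgγ u hu, hg0 v hvS]⟩
      have huβ : h u ≤ β := hhβ u hu
      have hvu_h : h v ≤ h u := humax v hvS
      have hvβ : h v ≤ β := hhβ v hvS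
      rcases abs_helper habs' hdabs with hcase | hcase
      · -- orientation: u goes with A', v with B'
        refine ⟨insert u A', insert v B', ?_, ?_, ?_, ?_, ?_⟩
        · rw [Finset.insert_union, Finset.union_insert, hu']
          exact hrecon
        · rw [Finset.disjoint_left]
          intro a haA haB
          rcases Finset.mem_insert.mp haA with rfl | haA'
          · rcases Finset.mem_insert.mp haB with h'' | h''
            · exact hvu h''.symm
            · exact huB' h''
          · rcases Finset.mem_insert.mp haB with rfl | h''
            · exact hvA' haA'
            · exact (Finset.disjoint_left.mp hd') haA' h''
        · rw [Finset.sum_insert huA', Finset.sum_insert hvB']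
          have heq : g u + (∑ e ∈ A', g e) - (g v + ∑ e ∈ B', g e)
              = ((∑ e ∈ A', g e) - ∑ e ∈ B', g e) + (g u - g v) := by ring
          rw [heq]
          exact hcase
        · rw [Finset.sum_insert huA', hsumS h]
          linarith [hhA', hvu_h, hvβ]
        · rw [Finset.sum_insert hvB', hsumS h]
          linarith [hhB', huβ]
      · -- orientation: v goes with A', u with B'
        refine ⟨insert v A', insert u B', ?_, ?_, ?_, ?_, ?_⟩
        · rw [Finset.insert_union, Finset.union_insert, hu', Finset.insert_comm]
          exact hrecon
        · rw [Finset.disjoint_left]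
          intro a haA haB
          rcases Finset.mem_insert.mp haA with rfl | haA'
          · rcases Finset.mem_insert.mp haB with h'' | h''
            · exact hvu h''
            · exact hvB' h''
          · rcases Finset.mem_insert.mp haB with rfl | h''
            · exact huA' haA'
            · exact (Finset.disjoint_left.mp hd') haA' h''
        · rw [Finset.sum_insert hvA', Finset.sum_insert huB']
          have heq : g v + (∑ e ∈ A', g e) - (g u + ∑ e ∈ B', g e)
              = ((∑ e ∈ A', g e) - ∑ e ∈ B', g e) - (g u - g v) := by ring
          rw [heq]
          exact hcase
        · rw [Finset.sum_insert hvA', hsumS h]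
          linarith [hhA', huβ]
        · rw [Finset.sum_insert huB', hsumS h]
          linarith [hhB', hvu_h, hvβ]

/-- 3 agents, additive nonnegative cost functions normalized to `c_i(M) = 1`.
`σ i 0` and `σ i 1` are the most and second most costly items of agent `i`
(the paper's `σ_i(1)` and `σ_i(2)`), and `M_i^- = M \ {σ i 0, σ i 1}`.
Assume `c_i(M_i^-) > 5 · c_i(σ_i(2))` for every agent `i`.  If agents 1 and 2
(indices `0` and `1`) are large (`c_i(σ_i(1)) ≥ 1/8`) and agent 3 (index `2`)
is small (`c_3(e) < 1/8` for every item), then a `4`-EFX allocation exists. -/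
theorem stmt_4 {ι : Type*} [DecidableEq ι] (M : Finset ι)
    (c : Fin 3 → ι → ℝ) (hc : ∀ i, ∀ e ∈ M, 0 ≤ c i e)
    (hnorm : ∀ i, ∑ e ∈ M, c i e = 1)
    (σ : Fin 3 → Fin 2 → ι)
    (hσmem : ∀ i k, σ i k ∈ M)
    (hσne : ∀ i, σ i 0 ≠ σ i 1)
    (hσtop1 : ∀ i, ∀ e ∈ M, c i e ≤ c i (σ i 0))
    (hσtop2 : ∀ i, ∀ e ∈ M, e ≠ σ i 0 → c i e ≤ c i (σ i 1))
    (hbig : ∀ i, ∑ e ∈ M \ {σ i 0, σ i 1}, c i e > 5 * c i (σ i 1))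
    (hlarge1 : c 0 (σ 0 0) ≥ 1 / 8)
    (hlarge2 : c 1 (σ 1 0) ≥ 1 / 8)
    (hsmall3 : ∀ e ∈ M, c 2 e < 1 / 8) :
    ∃ X : Fin 3 → Finset ι,
      (∀ i j, i ≠ j → Disjoint (X i) (X j)) ∧
      (Finset.univ.biUnion X = M) ∧
      (∀ i j : Fin 3, ∀ e ∈ X i,
        ∑ f ∈ (X i).erase e, c i f ≤ 4 * ∑ f ∈ X j, c i f) := by
  classical
  have hsM : σ 0 0 ∈ M := hσmem 0 0
  have htM : σ 1 0 ∈ M := hσmem 1 0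
  set Z : Finset ι := insert (σ 0 0) {σ 1 0} with hZdef
  have hsZ : σ 0 0 ∈ Z := Finset.mem_insert_self _ _
  have htZ : σ 1 0 ∈ Z := Finset.mem_insert_of_mem (Finset.mem_singleton_self _)
  have hZM : Z ⊆ M := by
    rw [hZdef]
    exact Finset.insert_subset_iff.mpr ⟨hsM, Finset.singleton_subset_iff.mpr htM⟩
  set R : Finset ι := M \ Z with hRdef
  have hRM : R ⊆ M := Finset.sdiff_subset
  have hRZd : Disjoint R Z := by rw [hRdef]; exact Finset.sdiff_disjoint
  have hRZ : ∀ i : Fin 3, (∑ e ∈ R, c i e) + ∑ e ∈ Z, c i e = 1 := by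
    intro i
    rw [hRdef, Finset.sum_sdiff hZM, hnorm i]
  have hZnn : ∀ i : Fin 3, (0:ℝ) ≤ ∑ e ∈ Z, c i e :=
    fun i => Finset.sum_nonneg fun e he => hc i e (hZM he)
  -- f(Z) ≥ 1/8
  have hfZ : (1:ℝ)/8 ≤ ∑ e ∈ Z, c 0 e := by
    have h1 : c 0 (σ 0 0) ≤ ∑ e ∈ Z, c 0 e :=
      Finset.single_le_sum (fun e he => hc 0 e (hZM he)) hsZ
    linarith [hlarge1]
  -- g(Z) ≥ 1/8, and c10 ≤ g(Z)
  have hc10Z : c 1 (σ 1 0) ≤ ∑ e ∈ Z, c 1 e :=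
    Finset.single_le_sum (fun e he => hc 1 e (hZM he)) htZ
  have hgZ : (1:ℝ)/8 ≤ ∑ e ∈ Z, c 1 e := by linarith [hlarge2]
  -- c11 facts
  have hc11nn : 0 ≤ c 1 (σ 1 1) := hc 1 _ (hσmem 1 1)
  have hc11le : c 1 (σ 1 1) ≤ c 1 (σ 1 0) := hσtop1 1 _ (hσmem 1 1)
  -- g(Z) ≤ c10 + c11
  have hgZub : (∑ e ∈ Z, c 1 e) ≤ c 1 (σ 1 0) + c 1 (σ 1 1) := by
    by_cases hst : σ 0 0 = σ 1 0
    · have hZt : Z = {σ 1 0} := by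
        rw [hZdef, hst]
        exact Finset.insert_eq_self.mpr (Finset.mem_singleton_self _)
      rw [hZt, Finset.sum_singleton]
      linarith
    · rw [hZdef, Finset.sum_pair hst]
      have hs11 : c 1 (σ 0 0) ≤ c 1 (σ 1 1) := hσtop2 1 _ hsM hst
      linarith
  -- h(Z) ≤ 1/4
  have hhZ : (∑ e ∈ Z, c 2 e) ≤ 1/4 := by
    by_cases hst : σ 0 0 = σ 1 0
    · have hZt : Z = {σ 1 0} := by
        rw [hZdef, hst]
        exact Finset.insert_eq_self.mpr (Finset.mem_singleton_self _)
      rw [hZt, Finset.sum_singleton]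
      linarith [hsmall3 _ htM]
    · rw [hZdef, Finset.sum_pair hst]
      linarith [hsmall3 _ hsM, hsmall3 _ htM]
  -- g(R) > 5 c11
  have hpair2 : ({σ 1 0, σ 1 1} : Finset ι) ⊆ M :=
    Finset.insert_subset_iff.mpr ⟨hσmem 1 0, Finset.singleton_subset_iff.mpr (hσmem 1 1)⟩
  have hMm : (∑ e ∈ M \ {σ 1 0, σ 1 1}, c 1 e) + (c 1 (σ 1 0) + c 1 (σ 1 1)) = 1 := by
    rw [← Finset.sum_pair (hσne 1), Finset.sum_sdiff hpair2, hnorm 1]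
  have hgRbig : 5 * c 1 (σ 1 1) < ∑ e ∈ R, c 1 e := by
    have hb := hbig 1
    have h1 := hRZ 1
    linarith
  -- pointwise facts on R
  have hRmem : ∀ e ∈ R, e ∈ M ∧ e ≠ σ 1 0 := by
    intro e he
    rw [hRdef, Finset.mem_sdiff] at he
    exact ⟨he.1, fun h' => he.2 (h' ▸ htZ)⟩
  -- apply the splitting lemma to R
  obtain ⟨A, B, hABu, hABd, hABg, hABhA, hABhB⟩ :=
    split_lemma (c 1) (c 2) (c 1 (σ 1 1)) hc11nn R.card R le_rfl
      (fun e he => hc 1 e (hRM he))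
      (fun e he => hσtop2 1 e (hRmem e he).1 (hRmem e he).2)
      (fun e he => hc 2 e (hRM he))
      (1/8) (by norm_num)
      (fun e he => le_of_lt (hsmall3 e (hRM he)))
  -- the assembly lemma (P gets agent 0, Q gets agent 1, Z gets agent 2)
  have aux : ∀ P Q : Finset ι, P ∪ Q = R → Disjoint P Q →
      ((∑ e ∈ P, c 1 e) - ∑ e ∈ Q, c 1 e ≤ c 1 (σ 1 1)) →
      ((∑ e ∈ Q, c 1 e) - ∑ e ∈ P, c 1 e ≤ c 1 (σ 1 1)) →
      (((∑ e ∈ R, c 2 e) - 1 / 8) / 2 ≤ ∑ e ∈ P, c 2 e) →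
      (((∑ e ∈ R, c 2 e) - 1 / 8) / 2 ≤ ∑ e ∈ Q, c 2 e) →
      ((∑ e ∈ P, c 0 e) ≤ ∑ e ∈ Q, c 0 e) →
      ∃ X : Fin 3 → Finset ι,
        (∀ i j, i ≠ j → Disjoint (X i) (X j)) ∧
        (Finset.univ.biUnion X = M) ∧
        (∀ i j : Fin 3, ∀ e ∈ X i,
          ∑ f ∈ (X i).erase e, c i f ≤ 4 * ∑ f ∈ X j, c i f) := by
    intro P Q hPQ hPQd hg1 hg2 hh1 hh2 hf
    have hPR : P ⊆ R := hPQ ▸ Finset.subset_union_left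
    have hQR : Q ⊆ R := hPQ ▸ Finset.subset_union_right
    have hPM : P ⊆ M := hPR.trans hRM
    have hQM : Q ⊆ M := hQR.trans hRM
    have hPnn : ∀ i : Fin 3, (0:ℝ) ≤ ∑ e ∈ P, c i e :=
      fun i => Finset.sum_nonneg fun e he => hc i e (hPM he)
    have hQnn : ∀ i : Fin 3, (0:ℝ) ≤ ∑ e ∈ Q, c i e :=
      fun i => Finset.sum_nonneg fun e he => hc i e (hQM he)
    have hPQs : ∀ i : Fin 3, (∑ e ∈ P, c i e) + ∑ e ∈ Q, c i e = ∑ e ∈ R, c i e := by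
      intro i
      rw [← Finset.sum_union hPQd, hPQ]
    have hPZd : Disjoint P Z := Finset.disjoint_of_subset_left hPR hRZd
    have hQZd : Disjoint Q Z := Finset.disjoint_of_subset_left hQR hRZd
    -- the nine sum comparisons
    have T00 : (∑ e ∈ P, c 0 e) ≤ 4 * ∑ e ∈ P, c 0 e := by linarith [hPnn 0]
    have T01 : (∑ e ∈ P, c 0 e) ≤ 4 * ∑ e ∈ Q, c 0 e := by linarith [hQnn 0]
    have T02 : (∑ e ∈ P, c 0 e) ≤ 4 * ∑ e ∈ Z, c 0 e := by
      have h1 := hPQs 0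
      have h2 := hRZ 0
      linarith
    have T10 : (∑ e ∈ Q, c 1 e) ≤ 4 * ∑ e ∈ P, c 1 e := by
      have h1 := hPQs 1
      linarith [hgRbig, hc11nn]
    have T11 : (∑ e ∈ Q, c 1 e) ≤ 4 * ∑ e ∈ Q, c 1 e := by linarith [hQnn 1]
    have T12 : (∑ e ∈ Q, c 1 e) ≤ 4 * ∑ e ∈ Z, c 1 e := by
      have h1 := hPQs 1
      have h2 := hRZ 1
      linarith [hc11le, hc10Z, hgZ]
    have T20 : (∑ e ∈ Z, c 2 e) ≤ 4 * ∑ e ∈ P, c 2 e := by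
      have h2 := hRZ 2
      linarith [hhZ, hh1]
    have T21 : (∑ e ∈ Z, c 2 e) ≤ 4 * ∑ e ∈ Q, c 2 e := by
      have h2 := hRZ 2
      linarith [hhZ, hh2]
    have T22 : (∑ e ∈ Z, c 2 e) ≤ 4 * ∑ e ∈ Z, c 2 e := by linarith [hZnn 2]
    have key : ∀ (i : Fin 3) (W V : Finset ι), W ⊆ M →
        ((∑ x ∈ W, c i x) ≤ 4 * ∑ x ∈ V, c i x) →
        ∀ e ∈ W, (∑ x ∈ W.erase e, c i x) ≤ 4 * ∑ x ∈ V, c i x := by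
      intro i W V hWM hWV e _
      refine le_trans (Finset.sum_le_sum_of_subset_of_nonneg (Finset.erase_subset _ _) ?_) hWV
      exact fun x hx _ => hc i x (hWM hx)
    refine ⟨fun i => if i = 0 then P else if i = 1 then Q else Z, ?_, ?_, ?_⟩
    · intro i j hij
      fin_cases i <;> fin_cases j
      · exact absurd rfl hij
      · exact hPQd
      · exact hPZd
      · exact hPQd.symm
      · exact absurd rfl hij
      · exact hQZd
      · exact hPZd.symm
      · exact hQZd.symm
      · exact absurd rfl hij
    · ext x
      simp only [Finset.mem_biUnion, Finset.mem_univ, true_and]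
      constructor
      · rintro ⟨i, hi⟩
        fin_cases i
        · exact hPM hi
        · exact hQM hi
        · exact hZM hi
      · intro hx
        by_cases hxZ : x ∈ Z
        · exact ⟨2, hxZ⟩
        · have hxR : x ∈ R := by
            rw [hRdef, Finset.mem_sdiff]
            exact ⟨hx, hxZ⟩
          rw [← hPQ] at hxR
          rcases Finset.mem_union.mp hxR with h' | h'
          · exact ⟨0, h'⟩
          · exact ⟨1, h'⟩
    · intro i j
      fin_cases i <;> fin_cases j
      · exact key 0 P P hPM T00
      · exact key 0 P Q hPM T01
      · exact key 0 P Z hPM T02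
      · exact key 1 Q P hQM T10
      · exact key 1 Q Q hQM T11
      · exact key 1 Q Z hQM T12
      · exact key 2 Z P hZM T20
      · exact key 2 Z Q hZM T21
      · exact key 2 Z Z hZM T22
  rcases abs_le.mp hABg with ⟨hgl, hgu⟩
  rcases le_total (∑ e ∈ A, c 0 e) (∑ e ∈ B, c 0 e) with hff | hff
  · exact aux A B hABu hABd hgu (by linarith) hABhA hABhB hff
  · refine aux B A ?_ hABd.symm (by linarith) hgu hABhB hABhA hff
    rw [Finset.union_comm]
    exact hABu
end

section
/- Let there be 3 agents and a finite set M of indivisible chores with additive nonnegative cost functions normalized so that c_i(M) = 1 for every agent i, and assume c_i(M_i^-) > 5·c_i(σ_i(2)) for every agent i. If all three agents are large, i.e., c_i(σ_i(1)) ≥ 1/8 for every agent i, then there exists a 4-EFX allocation. -/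
open Finset

/-- Every element of `Fin 3` is one of three pairwise distinct elements. -/
private lemma tri3 : ∀ p q r i : Fin 3, p ≠ q → p ≠ r → q ≠ r →
    (i = p ∨ i = q ∨ i = r) := by decide

private lemma third_exists : ∀ p q : Fin 3, ∃ r : Fin 3, r ≠ p ∧ r ≠ q := by decide

private lemma trich3 : ∀ x : Fin 3, x = 0 ∨ x = 1 ∨ x = 2 := by decide

private lemma others3 : ∀ i : Fin 3, ∃ j k : Fin 3, i ≠ j ∧ i ≠ k ∧ j ≠ k := by decide

/-- Two-measure cut lemma: any finite set can be split into two parts that are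
balanced for `f` (difference at most the item bound `sf`) and such that both
parts carry at least `(g S - sg)/2` of the measure `g`. -/
private lemma cutE {ι : Type*} [DecidableEq ι] (f g : ι → ℝ) (sf : ℝ) (hsf : 0 ≤ sf) :
    ∀ (n : ℕ) (S : Finset ι) (sg : ℝ), 0 ≤ sg → S.card ≤ n →
      (∀ e ∈ S, 0 ≤ f e) → (∀ e ∈ S, f e ≤ sf) →
      (∀ e ∈ S, 0 ≤ g e) → (∀ e ∈ S, g e ≤ sg) →
      ∃ A B : Finset ι, Disjoint A B ∧ A ∪ B = S ∧
        (∑ x ∈ A, f x) ≤ (∑ x ∈ B, f x) + sf ∧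
        (∑ x ∈ B, f x) ≤ (∑ x ∈ A, f x) + sf ∧
        (∑ x ∈ S, g x) - sg ≤ 2 * ∑ x ∈ A, g x ∧
        (∑ x ∈ S, g x) - sg ≤ 2 * ∑ x ∈ B, g x := by
  intro n
  induction n with
  | zero =>
      intro S sg hsg hcard _ _ _ _
      have hS : S = ∅ := Finset.card_eq_zero.mp (Nat.le_zero.mp hcard)
      subst hS
      refine ⟨∅, ∅, Finset.disjoint_empty_left _, by simp, ?_, ?_, ?_, ?_⟩ <;>
        simp only [Finset.sum_empty] <;> linarith
  | succ n ih =>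
      intro S sg hsg hcard hf0 hf1 hg0 hg1
      rcases Finset.eq_empty_or_nonempty S with rfl | hne
      · refine ⟨∅, ∅, Finset.disjoint_empty_left _, by simp, ?_, ?_, ?_, ?_⟩ <;>
          simp only [Finset.sum_empty] <;> linarith
      obtain ⟨e1, he1S, hmax1⟩ := S.exists_max_image g hne
      rcases Finset.eq_empty_or_nonempty (S.erase e1) with hS' | hne'
      · -- S is a singleton
        have hSe : S = {e1} := by
          apply Finset.eq_singleton_iff_unique_mem.mpr
          refine ⟨he1S, ?_⟩
          intro x hx
          by_contra hxe
          have hmem : x ∈ S.erase e1 := Finset.mem_erase.mpr ⟨hxe, hx⟩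
          rw [hS'] at hmem
          exact absurd hmem (Finset.notMem_empty x)
        subst hSe
        refine ⟨{e1}, ∅, Finset.disjoint_empty_right _, by simp, ?_, ?_, ?_, ?_⟩ <;>
          simp only [Finset.sum_singleton, Finset.sum_empty]
        · linarith [hf1 e1 (Finset.mem_singleton_self e1)]
        · linarith [hf0 e1 (Finset.mem_singleton_self e1)]
        · linarith [hg0 e1 (Finset.mem_singleton_self e1)]
        · linarith [hg1 e1 (Finset.mem_singleton_self e1)]
      · obtain ⟨e2, he2S', hmax2⟩ := (S.erase e1).exists_max_image g hne'
        have he2S : e2 ∈ S := Finset.mem_of_mem_erase he2S'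
        have he21 : e2 ≠ e1 := (Finset.mem_erase.mp he2S').1
        set S'' := (S.erase e1).erase e2 with hS''def
        have hsub'' : S'' ⊆ S :=
          (Finset.erase_subset _ _).trans (Finset.erase_subset _ _)
        have he1S'' : e1 ∉ S'' := by
          intro hmem
          exact Finset.notMem_erase e1 S (Finset.mem_of_mem_erase hmem)
        have he2S'' : e2 ∉ S'' := Finset.notMem_erase _ _
        have hcard'' : S''.card ≤ n := by
          have h1 : (S.erase e1).card = S.card - 1 := Finset.card_erase_of_mem he1S
          have h2 : S''.card = (S.erase e1).card - 1 := Finset.card_erase_of_mem he2S'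
          have h3 : 1 ≤ S.card := Finset.card_pos.mpr hne
          omega
        obtain ⟨A', B', hd, hu, hfb1, hfb2, hg1', hg2'⟩ :=
          ih S'' (g e2) (hg0 e2 he2S) hcard''
            (fun e he => hf0 e (hsub'' he)) (fun e he => hf1 e (hsub'' he))
            (fun e he => hg0 e (hsub'' he))
            (fun e he => hmax2 e (Finset.mem_of_mem_erase he))
        have hA'sub : A' ⊆ S'' := by rw [← hu]; exact Finset.subset_union_left
        have hB'sub : B' ⊆ S'' := by rw [← hu]; exact Finset.subset_union_right
        have he1A : e1 ∉ A' := fun hmem => he1S'' (hA'sub hmem)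
        have he1B : e1 ∉ B' := fun hmem => he1S'' (hB'sub hmem)
        have he2A : e2 ∉ A' := fun hmem => he2S'' (hA'sub hmem)
        have he2B : e2 ∉ B' := fun hmem => he2S'' (hB'sub hmem)
        have hsumSg : ∑ x ∈ S, g x = g e1 + g e2 + ∑ x ∈ S'', g x := by
          have q1 := Finset.sum_erase_add S g he1S
          have q2 := Finset.sum_erase_add (S.erase e1) g he2S'
          rw [hS''def]
          linarith
        have hge21 : g e2 ≤ g e1 := hmax1 e2 he2S
        have hge1sg : g e1 ≤ sg := hg1 e1 he1S
        have hge20 : 0 ≤ g e2 := hg0 e2 he2S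
        have key : ∀ u v : ι, ((u = e1 ∧ v = e2) ∨ (u = e2 ∧ v = e1)) →
            f u + ∑ x ∈ A', f x ≤ (f v + ∑ x ∈ B', f x) + sf →
            f v + ∑ x ∈ B', f x ≤ (f u + ∑ x ∈ A', f x) + sf →
            ∃ A B : Finset ι, Disjoint A B ∧ A ∪ B = S ∧
              (∑ x ∈ A, f x) ≤ (∑ x ∈ B, f x) + sf ∧
              (∑ x ∈ B, f x) ≤ (∑ x ∈ A, f x) + sf ∧
              (∑ x ∈ S, g x) - sg ≤ 2 * ∑ x ∈ A, g x ∧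
              (∑ x ∈ S, g x) - sg ≤ 2 * ∑ x ∈ B, g x := by
          rintro u v huv hbal1 hbal2
          have huA : u ∉ A' := by rcases huv with ⟨rfl, _⟩ | ⟨rfl, _⟩ <;> assumption
          have hvB : v ∉ B' := by rcases huv with ⟨_, rfl⟩ | ⟨_, rfl⟩ <;> assumption
          have huB : u ∉ B' := by rcases huv with ⟨rfl, _⟩ | ⟨rfl, _⟩ <;> assumption
          have hvA : v ∉ A' := by rcases huv with ⟨_, rfl⟩ | ⟨_, rfl⟩ <;> assumption
          have huv_ne : u ≠ v := by
            rcases huv with ⟨rfl, rfl⟩ | ⟨rfl, rfl⟩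
            · exact he21.symm
            · exact he21
          have hge2u : g e2 ≤ g u := by
            rcases huv with ⟨rfl, _⟩ | ⟨rfl, _⟩
            · exact hge21
            · exact le_rfl
          have hge2v : g e2 ≤ g v := by
            rcases huv with ⟨_, rfl⟩ | ⟨_, rfl⟩
            · exact le_rfl
            · exact hge21
          refine ⟨insert u A', insert v B', ?_, ?_, ?_, ?_, ?_, ?_⟩
          · refine Finset.disjoint_left.mpr ?_
            intro x hxA hxB
            rcases Finset.mem_insert.mp hxA with rfl | hxA'
            · rcases Finset.mem_insert.mp hxB with heq | hmem
              · exact huv_ne heq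
              · exact huB hmem
            · rcases Finset.mem_insert.mp hxB with rfl | hxB'
              · exact hvA hxA'
              · exact (Finset.disjoint_left.mp hd hxA') hxB'
          · have hstep : insert u A' ∪ insert v B' = insert u (insert v (A' ∪ B')) := by
              rw [Finset.insert_union, Finset.union_insert]
            rw [hstep, hu]
            rcases huv with ⟨rfl, rfl⟩ | ⟨rfl, rfl⟩
            · rw [hS''def, Finset.insert_erase he2S', Finset.insert_erase he1S]
            · rw [Finset.insert_comm, hS''def, Finset.insert_erase he2S',
                Finset.insert_erase he1S]
          · rw [Finset.sum_insert huA, Finset.sum_insert hvB]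
            exact hbal1
          · rw [Finset.sum_insert huA, Finset.sum_insert hvB]
            exact hbal2
          · rw [Finset.sum_insert huA]
            linarith
          · rw [Finset.sum_insert hvB]
            linarith
        have hf0e1 := hf0 e1 he1S
        have hf1e1 := hf1 e1 he1S
        have hf0e2 := hf0 e2 he2S
        have hf1e2 := hf1 e2 he2S
        rcases le_total (∑ x ∈ A', f x) (∑ x ∈ B', f x) with hAB | hAB
        · rcases le_total (f e1) (f e2) with h12 | h12
          · exact key e2 e1 (Or.inr ⟨rfl, rfl⟩) (by linarith) (by linarith)
          · exact key e1 e2 (Or.inl ⟨rfl, rfl⟩) (by linarith) (by linarith)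
        · rcases le_total (f e1) (f e2) with h12 | h12
          · exact key e1 e2 (Or.inl ⟨rfl, rfl⟩) (by linarith) (by linarith)
          · exact key e2 e1 (Or.inr ⟨rfl, rfl⟩) (by linarith) (by linarith)

/-- Assembly lemma: from three bundles assigned to three distinct agents with all
six cross 4-EFX inequalities, build the allocation function. -/
private lemma assemble {ι : Type*} [DecidableEq ι] (M : Finset ι) (c : Fin 3 → ι → ℝ)
    (hc : ∀ i, ∀ e ∈ M, 0 ≤ c i e)
    (p q r : Fin 3) (hpq : p ≠ q) (hpr : p ≠ r) (hqr : q ≠ r)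
    (Yp Yq Yr : Finset ι)
    (hsp : Yp ⊆ M) (hsq : Yq ⊆ M) (hsr : Yr ⊆ M)
    (hcov : ∀ e ∈ M, e ∈ Yp ∨ e ∈ Yq ∨ e ∈ Yr)
    (dpq : Disjoint Yp Yq) (dpr : Disjoint Yp Yr) (dqr : Disjoint Yq Yr)
    (hpq' : ∀ e ∈ Yp, ∑ x ∈ Yp.erase e, c p x ≤ 4 * ∑ x ∈ Yq, c p x)
    (hpr' : ∀ e ∈ Yp, ∑ x ∈ Yp.erase e, c p x ≤ 4 * ∑ x ∈ Yr, c p x)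
    (hqp' : ∀ e ∈ Yq, ∑ x ∈ Yq.erase e, c q x ≤ 4 * ∑ x ∈ Yp, c q x)
    (hqr' : ∀ e ∈ Yq, ∑ x ∈ Yq.erase e, c q x ≤ 4 * ∑ x ∈ Yr, c q x)
    (hrp' : ∀ e ∈ Yr, ∑ x ∈ Yr.erase e, c r x ≤ 4 * ∑ x ∈ Yp, c r x)
    (hrq' : ∀ e ∈ Yr, ∑ x ∈ Yr.erase e, c r x ≤ 4 * ∑ x ∈ Yq, c r x) :
    ∃ X : Fin 3 → Finset ι,
      (∀ i j, i ≠ j → Disjoint (X i) (X j)) ∧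
      (Finset.univ.biUnion X = M) ∧
      (∀ i j : Fin 3, ∀ e ∈ X i,
        ∑ f ∈ (X i).erase e, c i f ≤ 4 * ∑ f ∈ X j, c i f) := by
  classical
  set X : Fin 3 → Finset ι := fun i => if i = p then Yp else if i = q then Yq else Yr
    with hXdef
  have hXp : X p = Yp := by simp [hXdef]
  have hXq : X q = Yq := by
    have : ¬ (q = p) := fun hh => hpq hh.symm
    simp [hXdef, this]
  have hXr : X r = Yr := by
    have h1 : ¬ (r = p) := fun hh => hpr hh.symm
    have h2 : ¬ (r = q) := fun hh => hqr hh.symm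
    simp [hXdef, h1, h2]
  have tri : ∀ i : Fin 3, i = p ∨ i = q ∨ i = r := fun i => tri3 p q r i hpq hpr hqr
  have hXcase : ∀ i, X i = Yp ∨ X i = Yq ∨ X i = Yr := by
    intro i
    rcases tri i with rfl | rfl | rfl
    · exact Or.inl hXp
    · exact Or.inr (Or.inl hXq)
    · exact Or.inr (Or.inr hXr)
  have hXsub : ∀ i, X i ⊆ M := by
    intro i
    rcases hXcase i with hh | hh | hh <;> rw [hh] <;> assumption
  refine ⟨X, ?_, ?_, ?_⟩
  · intro i j hij
    rcases tri i with rfl | rfl | rfl <;> rcases tri j with rfl | rfl | rfl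
    · exact absurd rfl hij
    · rw [hXp, hXq]; exact dpq
    · rw [hXp, hXr]; exact dpr
    · rw [hXq, hXp]; exact dpq.symm
    · exact absurd rfl hij
    · rw [hXq, hXr]; exact dqr
    · rw [hXr, hXp]; exact dpr.symm
    · rw [hXr, hXq]; exact dqr.symm
    · exact absurd rfl hij
  · ext x
    simp only [Finset.mem_biUnion, Finset.mem_univ, true_and]
    constructor
    · rintro ⟨i, hi⟩
      exact hXsub i hi
    · intro hx
      rcases hcov x hx with hh | hh | hh
      · exact ⟨p, by rwa [hXp]⟩
      · exact ⟨q, by rwa [hXq]⟩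
      · exact ⟨r, by rwa [hXr]⟩
  · intro i j e he
    by_cases hij : i = j
    · subst hij
      have hsub := hXsub i
      have h1 : ∑ x ∈ (X i).erase e, c i x ≤ ∑ x ∈ X i, c i x :=
        Finset.sum_le_sum_of_subset_of_nonneg (Finset.erase_subset _ _)
          (fun x hx _ => hc i x (hsub hx))
      have h2 : 0 ≤ ∑ x ∈ X i, c i x :=
        Finset.sum_nonneg fun x hx => hc i x (hsub hx)
      linarith
    · rcases tri i with rfl | rfl | rfl <;> rcases tri j with rfl | rfl | rfl
      · exact absurd rfl hij
      · rw [hXp] at he; rw [hXp, hXq]; exact hpq' e he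
      · rw [hXp] at he; rw [hXp, hXr]; exact hpr' e he
      · rw [hXq] at he; rw [hXq, hXp]; exact hqp' e he
      · exact absurd rfl hij
      · rw [hXq] at he; rw [hXq, hXr]; exact hqr' e he
      · rw [hXr] at he; rw [hXr, hXp]; exact hrp' e he
      · rw [hXr] at he; rw [hXr, hXq]; exact hrq' e he
      · exact absurd rfl hij

/-- 3 agents, additive nonnegative cost functions normalized to `c_i(M) = 1`.
`σ i 0` and `σ i 1` are the most and second most costly items of agent `i`
(the paper's `σ_i(1)` and `σ_i(2)`), and `M_i^- = M \ {σ i 0, σ i 1}`.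
Assume `c_i(M_i^-) > 5 · c_i(σ_i(2))` for every agent `i`.  If all three agents
are large (`c_i(σ_i(1)) ≥ 1/8` for every `i`), then a `4`-EFX allocation exists. -/
theorem stmt_5 {ι : Type*} [DecidableEq ι] (M : Finset ι)
    (c : Fin 3 → ι → ℝ) (hc : ∀ i, ∀ e ∈ M, 0 ≤ c i e)
    (hnorm : ∀ i, ∑ e ∈ M, c i e = 1)
    (σ : Fin 3 → Fin 2 → ι)
    (hσmem : ∀ i k, σ i k ∈ M)
    (hσne : ∀ i, σ i 0 ≠ σ i 1)
    (hσtop1 : ∀ i, ∀ e ∈ M, c i e ≤ c i (σ i 0))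
    (hσtop2 : ∀ i, ∀ e ∈ M, e ≠ σ i 0 → c i e ≤ c i (σ i 1))
    (hbig : ∀ i, ∑ e ∈ M \ {σ i 0, σ i 1}, c i e > 5 * c i (σ i 1))
    (hlarge : ∀ i, c i (σ i 0) ≥ 1 / 8) :
    ∃ X : Fin 3 → Finset ι,
      (∀ i j, i ≠ j → Disjoint (X i) (X j)) ∧
      (Finset.univ.biUnion X = M) ∧
      (∀ i j : Fin 3, ∀ e ∈ X i,
        ∑ f ∈ (X i).erase e, c i f ≤ 4 * ∑ f ∈ X j, c i f) := by
  classical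
  have hs0 : ∀ i : Fin 3, 0 ≤ c i (σ i 1) := fun i => hc i _ (hσmem i 1)
  have ht0 : ∀ i : Fin 3, 0 ≤ c i (σ i 0) := fun i => hc i _ (hσmem i 0)
  have hst : ∀ i : Fin 3, c i (σ i 1) ≤ c i (σ i 0) := fun i => hσtop1 i _ (hσmem i 1)
  have hEr : ∀ (i : Fin 3) (Y : Finset ι), Y ⊆ M → ∀ e : ι,
      ∑ x ∈ Y.erase e, c i x ≤ ∑ x ∈ Y, c i x := by
    intro i Y hY e
    exact Finset.sum_le_sum_of_subset_of_nonneg (Finset.erase_subset _ _)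
      (fun x hx _ => hc i x (hY hx))
  have hNN : ∀ (i : Fin 3) (Y : Finset ι), Y ⊆ M → 0 ≤ ∑ x ∈ Y, c i x :=
    fun i Y hY => Finset.sum_nonneg fun x hx => hc i x (hY hx)
  have hsix : ∀ i : Fin 3, 6 * c i (σ i 1) < 1 - c i (σ i 0) := by
    intro i
    have hsub : ({σ i 0, σ i 1} : Finset ι) ⊆ M := by
      intro x hx
      rcases Finset.mem_insert.mp hx with rfl | hx
      · exact hσmem i 0
      · rw [Finset.mem_singleton.mp hx]
        exact hσmem i 1
    have h1 : ∑ e ∈ M \ {σ i 0, σ i 1}, c i e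
        = 1 - (c i (σ i 0) + c i (σ i 1)) := by
      rw [Finset.sum_sdiff_eq_sub hsub, hnorm i, Finset.sum_pair (hσne i)]
    have h2 := hbig i
    rw [h1] at h2
    linarith
  by_cases hgood : ∃ p q : Fin 3, q ≠ p ∧ 1/9 ≤ c q (σ p 0)
  · -- GOOD CASE
    obtain ⟨p, q, hqp, hγ⟩ := hgood
    obtain ⟨r, hrp, hrq⟩ := third_exists p q
    set R' := M.erase (σ p 0) with hR'def
    have hR'sub : R' ⊆ M := Finset.erase_subset _ _
    have hitem : ∀ e ∈ R', c p e ≤ c p (σ p 1) :=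
      fun e he => hσtop2 p e (hR'sub he) (Finset.ne_of_mem_erase he)
    have hsumR' : ∀ i : Fin 3, ∑ e ∈ R', c i e = 1 - c i (σ p 0) := by
      intro i
      rw [hR'def, Finset.sum_erase_eq_sub (hσmem p 0), hnorm i]
    obtain ⟨A, B, hdisj, hun, hb1, hb2, hgA, hgB⟩ :=
      cutE (c p) (c p) (c p (σ p 1)) (hs0 p) R'.card R' (c p (σ p 1)) (hs0 p) le_rfl
        (fun e he => hc p e (hR'sub he)) hitem
        (fun e he => hc p e (hR'sub he)) hitem
    rw [hsumR' p] at hgA hgB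
    have hAsub : A ⊆ R' := by rw [← hun]; exact Finset.subset_union_left
    have hBsub : B ⊆ R' := by rw [← hun]; exact Finset.subset_union_right
    have main : ∀ A B : Finset ι, A ⊆ R' → B ⊆ R' → Disjoint A B → A ∪ B = R' →
        (∑ x ∈ A, c p x ≤ ∑ x ∈ B, c p x + c p (σ p 1)) →
        (∑ x ∈ B, c p x ≤ ∑ x ∈ A, c p x + c p (σ p 1)) →
        ((1 - c p (σ p 0)) - c p (σ p 1) ≤ 2 * ∑ x ∈ A, c p x) →
        (∑ x ∈ A, c q x ≤ ∑ x ∈ B, c q x) →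
        ∃ X : Fin 3 → Finset ι,
          (∀ i j, i ≠ j → Disjoint (X i) (X j)) ∧
          (Finset.univ.biUnion X = M) ∧
          (∀ i j : Fin 3, ∀ e ∈ X i,
            ∑ f ∈ (X i).erase e, c i f ≤ 4 * ∑ f ∈ X j, c i f) := by
      intro A B hAs hBs hd hu hpb1 hpb2 hpA hch
      have hAM : A ⊆ M := hAs.trans hR'sub
      have hBM : B ⊆ M := hBs.trans hR'sub
      have hgM : ({σ p 0} : Finset ι) ⊆ M :=
        Finset.singleton_subset_iff.mpr (hσmem p 0)
      have hTp : ∑ x ∈ A, c p x + ∑ x ∈ B, c p x = 1 - c p (σ p 0) := by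
        rw [← Finset.sum_union hd, hu, hsumR' p]
      have hTq : ∑ x ∈ A, c q x + ∑ x ∈ B, c q x = 1 - c q (σ p 0) := by
        rw [← Finset.sum_union hd, hu, hsumR' q]
      have hgnA : σ p 0 ∉ A := fun hmem => Finset.notMem_erase _ _ (hAs hmem)
      have hgnB : σ p 0 ∉ B := fun hmem => Finset.notMem_erase _ _ (hBs hmem)
      have hsing : ∀ i : Fin 3, ∑ x ∈ ({σ p 0} : Finset ι), c i x = c i (σ p 0) :=
        fun i => Finset.sum_singleton _ _
      refine assemble M c hc p q r (Ne.symm hqp) (Ne.symm hrp) (Ne.symm hrq)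
        B A {σ p 0} hBM hAM hgM ?_ hd.symm
        (Finset.disjoint_singleton_right.mpr hgnB)
        (Finset.disjoint_singleton_right.mpr hgnA)
        ?_ ?_ ?_ ?_ ?_ ?_
      · -- coverage
        intro e he
        by_cases heg : e = σ p 0
        · exact Or.inr (Or.inr (by simp [heg]))
        · have heR : e ∈ R' := by
            rw [hR'def]
            exact Finset.mem_erase.mpr ⟨heg, he⟩
          rw [← hu] at heR
          rcases Finset.mem_union.mp heR with hA | hB
          · exact Or.inr (Or.inl hA)
          · exact Or.inl hB
      · -- p vs q : B against A
        intro e he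
        have h1 := hEr p B hBM e
        linarith [hsix p, hs0 p, hpA, hTp]
      · -- p vs r : B against {σ p 0}
        intro e he
        have h1 := hEr p B hBM e
        rw [hsing p]
        linarith [hTp, hpb2, hlarge p, hst p]
      · -- q vs p : A against B
        intro e he
        have h1 := hEr q A hAM e
        linarith [hch, hNN q B hBM]
      · -- q vs r : A against {σ p 0}
        intro e he
        have h1 := hEr q A hAM e
        rw [hsing q]
        linarith [hch, hTq, hγ]
      · -- r vs p
        intro e he
        have heg : e = σ p 0 := Finset.mem_singleton.mp he
        subst heg
        rw [Finset.erase_singleton]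
        simp only [Finset.sum_empty]
        linarith [hNN r B hBM]
      · -- r vs q
        intro e he
        have heg : e = σ p 0 := Finset.mem_singleton.mp he
        subst heg
        rw [Finset.erase_singleton]
        simp only [Finset.sum_empty]
        linarith [hNN r A hAM]
    rcases le_total (∑ x ∈ A, c q x) (∑ x ∈ B, c q x) with hch | hch
    · exact main A B hAsub hBsub hdisj hun hb1 hb2 hgA hch
    · exact main B A hBsub hAsub hdisj.symm (by rw [Finset.union_comm]; exact hun)
        hb2 hb1 hgB hch
  · -- BAD CASE
    push_neg at hgood
    have htopne : ∀ i j : Fin 3, i ≠ j → σ i 0 ≠ σ j 0 := by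
      intro i j hij heq
      have h1 := hgood i j (Ne.symm hij)
      rw [heq] at h1
      have h2 := hlarge j
      linarith
    set T3 : Finset ι := {σ 0 0, σ 1 0, σ 2 0} with hT3def
    have hT3sub : T3 ⊆ M := by
      intro x hx
      simp only [hT3def, Finset.mem_insert, Finset.mem_singleton] at hx
      rcases hx with rfl | rfl | rfl <;> exact hσmem _ 0
    set R0 := M \ T3 with hR0def
    have hR0sub : R0 ⊆ M := Finset.sdiff_subset
    have hmemT3 : ∀ i : Fin 3, σ i 0 ∈ T3 := by
      intro i
      rcases trich3 i with rfl | rfl | rfl <;> simp [hT3def]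
    have hnotR0 : ∀ x : ι, x ∈ T3 → x ∉ R0 := by
      intro x hx hR
      rw [hR0def] at hR
      exact (Finset.mem_sdiff.mp hR).2 hx
    have hTeq : ∀ x y z : Fin 3, x ≠ y → x ≠ z → y ≠ z →
        ({σ x 0, σ y 0, σ z 0} : Finset ι) = T3 := by
      intro x y z hxy hxz hyz
      have hall : ∀ w : Fin 3, w = x ∨ w = y ∨ w = z := fun w => tri3 x y z w hxy hxz hyz
      ext u
      simp only [hT3def, Finset.mem_insert, Finset.mem_singleton]
      constructor
      · rintro (rfl | rfl | rfl)
        · rcases trich3 x with rfl | rfl | rfl <;> tauto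
        · rcases trich3 y with rfl | rfl | rfl <;> tauto
        · rcases trich3 z with rfl | rfl | rfl <;> tauto
      · rintro (rfl | rfl | rfl)
        · rcases hall 0 with rfl | rfl | rfl <;> tauto
        · rcases hall 1 with rfl | rfl | rfl <;> tauto
        · rcases hall 2 with rfl | rfl | rfl <;> tauto
    have hforeign : ∀ i j : Fin 3, i ≠ j → c i (σ j 0) ≤ c i (σ i 1) := fun i j hij =>
      hσtop2 i _ (hσmem j 0) (htopne j i (Ne.symm hij))
    have hsumR0' : ∀ i j k : Fin 3, i ≠ j → i ≠ k → j ≠ k →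
        ∑ e ∈ R0, c i e = 1 - c i (σ i 0) - c i (σ j 0) - c i (σ k 0) := by
      intro i j k hij hik hjk
      have hne1 : σ i 0 ∉ ({σ j 0, σ k 0} : Finset ι) := by
        simp only [Finset.mem_insert, Finset.mem_singleton]
        push_neg
        exact ⟨htopne i j hij, htopne i k hik⟩
      rw [hR0def, Finset.sum_sdiff_eq_sub hT3sub, hnorm i, ← hTeq i j k hij hik hjk,
        Finset.sum_insert hne1, Finset.sum_pair (htopne j k hjk)]
      ring
    have hρ4s : ∀ i : Fin 3, 4 * c i (σ i 1) < ∑ e ∈ R0, c i e := by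
      intro i
      obtain ⟨j, k, hij, hik, hjk⟩ := others3 i
      have h1 := hsumR0' i j k hij hik hjk
      have h2 := hforeign i j hij
      have h3 := hforeign i k hik
      linarith [hsix i]
    have hitemR0 : ∀ (i : Fin 3), ∀ e ∈ R0, c i e ≤ c i (σ i 1) := by
      intro i e he
      refine hσtop2 i e (hR0sub he) ?_
      intro heq
      exact hnotR0 e (heq ▸ hmemT3 i) he
    by_cases hE : ∃ p z : Fin 3, p ≠ z ∧ c p (σ z 0) ≤ 3/2 * ∑ x ∈ R0, c p x
    · -- BAD CASE 1
      obtain ⟨p, z, hpz, hw⟩ := hE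
      obtain ⟨q, hqp, hqz⟩ := third_exists p z
      obtain ⟨A, B, hdisj, hun, hb1, hb2, hgA, hgB⟩ :=
        cutE (c q) (c z) (c q (σ q 1)) (hs0 q) R0.card R0 (c z (σ z 1)) (hs0 z) le_rfl
          (fun e he => hc q e (hR0sub he)) (hitemR0 q)
          (fun e he => hc z e (hR0sub he)) (hitemR0 z)
      have hAsub : A ⊆ R0 := by rw [← hun]; exact Finset.subset_union_left
      have hBsub : B ⊆ R0 := by rw [← hun]; exact Finset.subset_union_right
      have main : ∀ A B : Finset ι, A ⊆ R0 → B ⊆ R0 → Disjoint A B → A ∪ B = R0 →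
          (∑ x ∈ A, c q x ≤ ∑ x ∈ B, c q x + c q (σ q 1)) →
          (∑ x ∈ B, c q x ≤ ∑ x ∈ A, c q x + c q (σ q 1)) →
          ((∑ x ∈ R0, c z x) - c z (σ z 1) ≤ 2 * ∑ x ∈ B, c z x) →
          (∑ x ∈ A, c p x ≤ ∑ x ∈ B, c p x) →
          ∃ X : Fin 3 → Finset ι,
            (∀ i j, i ≠ j → Disjoint (X i) (X j)) ∧
            (Finset.univ.biUnion X = M) ∧
            (∀ i j : Fin 3, ∀ e ∈ X i,
              ∑ f ∈ (X i).erase e, c i f ≤ 4 * ∑ f ∈ X j, c i f) := by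
        intro A B hAs hBs hd hu hq1 hq2 hzB hch
        have hAM : A ⊆ M := hAs.trans hR0sub
        have hBM : B ⊆ M := hBs.trans hR0sub
        have hzA : σ z 0 ∉ A := fun hmem => hnotR0 _ (hmemT3 z) (hAs hmem)
        have hzB' : σ z 0 ∉ B := fun hmem => hnotR0 _ (hmemT3 z) (hBs hmem)
        have hYpM : insert (σ z 0) A ⊆ M :=
          Finset.insert_subset_iff.mpr ⟨hσmem z 0, hAM⟩
        have hYrM : ({σ p 0, σ q 0} : Finset ι) ⊆ M := by
          intro x hx
          rcases Finset.mem_insert.mp hx with rfl | hx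
          · exact hσmem p 0
          · rw [Finset.mem_singleton.mp hx]; exact hσmem q 0
        have hYp_sum : ∀ i : Fin 3,
            ∑ x ∈ insert (σ z 0) A, c i x = c i (σ z 0) + ∑ x ∈ A, c i x :=
          fun i => Finset.sum_insert hzA
        have hYr_sum : ∀ i : Fin 3,
            ∑ x ∈ ({σ p 0, σ q 0} : Finset ι), c i x = c i (σ p 0) + c i (σ q 0) :=
          fun i => Finset.sum_pair (htopne p q (Ne.symm hqp))
        have hABi : ∀ i : Fin 3, ∑ x ∈ A, c i x + ∑ x ∈ B, c i x = ∑ x ∈ R0, c i x :=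
          fun i => by rw [← Finset.sum_union hd, hu]
        have hρp := hsumR0' p z q hpz (Ne.symm hqp) (Ne.symm hqz)
        have hρq := hsumR0' q p z hqp hqz hpz
        have hρz := hsumR0' z p q (Ne.symm hpz) (Ne.symm hqz) (Ne.symm hqp)
        have hwlt : c p (σ z 0) < 1/9 := hgood z p hpz
        refine assemble M c hc p q z (Ne.symm hqp) hpz hqz
          (insert (σ z 0) A) B {σ p 0, σ q 0} hYpM hBM hYrM ?_ ?_ ?_ ?_
          ?_ ?_ ?_ ?_ ?_ ?_
        · -- coverage
          intro e he
          by_cases heT : e ∈ T3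
          · have heT' : e ∈ ({σ z 0, σ p 0, σ q 0} : Finset ι) := by
              rw [hTeq z p q (Ne.symm hpz) (Ne.symm hqz) (Ne.symm hqp)]
              exact heT
            simp only [Finset.mem_insert, Finset.mem_singleton] at heT'
            rcases heT' with rfl | rfl | rfl
            · exact Or.inl (Finset.mem_insert_self _ _)
            · exact Or.inr (Or.inr (by simp))
            · exact Or.inr (Or.inr (by simp))
          · have heR : e ∈ R0 := by
              rw [hR0def]
              exact Finset.mem_sdiff.mpr ⟨he, heT⟩
            rw [← hu] at heR
            rcases Finset.mem_union.mp heR with hA | hB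
            · exact Or.inl (Finset.mem_insert_of_mem hA)
            · exact Or.inr (Or.inl hB)
        · -- disjoint Yp Yq
          exact Finset.disjoint_insert_left.mpr ⟨hzB', hd⟩
        · -- disjoint Yp Yr
          refine Finset.disjoint_left.mpr ?_
          intro x hx hx'
          have hxT : x ∈ T3 := by
            rcases Finset.mem_insert.mp hx' with rfl | hx''
            · exact hmemT3 p
            · rw [Finset.mem_singleton.mp hx'']
              exact hmemT3 q
          rcases Finset.mem_insert.mp hx with rfl | hx2
          · rcases Finset.mem_insert.mp hx' with heq | hx''
            · exact htopne z p (Ne.symm hpz) heq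
            · exact htopne z q (Ne.symm hqz) (Finset.mem_singleton.mp hx'')
          · exact hnotR0 x hxT (hAs hx2)
        · -- disjoint Yq Yr
          refine Finset.disjoint_left.mpr ?_
          intro x hx hx'
          have hxT : x ∈ T3 := by
            rcases Finset.mem_insert.mp hx' with rfl | hx''
            · exact hmemT3 p
            · rw [Finset.mem_singleton.mp hx'']
              exact hmemT3 q
          exact hnotR0 x hxT (hBs hx)
        · -- p vs q
          intro e he
          have h1 := hEr p (insert (σ z 0) A) hYpM e
          rw [hYp_sum p] at h1
          linarith [hw, hABi p, hch]
        · -- p vs z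
          intro e he
          have h1 := hEr p (insert (σ z 0) A) hYpM e
          rw [hYp_sum p] at h1
          rw [hYr_sum p]
          linarith [hρp, hABi p, hch, hwlt, hlarge p, hc p _ (hσmem q 0)]
        · -- q vs p
          intro e he
          have h1 := hEr q B hBM e
          rw [hYp_sum q]
          linarith [hq1, hq2, hABi q, hρ4s q, hs0 q, hc q _ (hσmem z 0)]
        · -- q vs z
          intro e he
          have h1 := hEr q B hBM e
          rw [hYr_sum q]
          linarith [hq2, hABi q, hρq, hc q _ (hσmem p 0), hc q _ (hσmem z 0),
            hst q, hlarge q]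
        · -- z vs p
          intro e he
          have h1 := hEr z ({σ p 0, σ q 0} : Finset ι) hYrM e
          rw [hYr_sum z] at h1
          rw [hYp_sum z]
          linarith [hforeign z p (Ne.symm hpz), hforeign z q (Ne.symm hqz),
            hst z, ht0 z, hs0 z, hNN z A hAM]
        · -- z vs q
          intro e he
          have h1 := hEr z ({σ p 0, σ q 0} : Finset ι) hYrM e
          rw [hYr_sum z] at h1
          linarith [hforeign z p (Ne.symm hpz), hforeign z q (Ne.symm hqz),
            hzB, hρ4s z, hs0 z]
      rcases le_total (∑ x ∈ A, c p x) (∑ x ∈ B, c p x) with hch | hch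
      · exact main A B hAsub hBsub hdisj hun hb1 hb2 hgB hch
      · exact main B A hBsub hAsub hdisj.symm (by rw [Finset.union_comm]; exact hun)
          hb2 hb1 hgA hch
    · -- BAD CASE 2
      push_neg at hE
      have hY0M : ({σ 1 0, σ 2 0} : Finset ι) ⊆ M := by
        intro x hx
        rcases Finset.mem_insert.mp hx with rfl | hx
        · exact hσmem 1 0
        · rw [Finset.mem_singleton.mp hx]; exact hσmem 2 0
      have hY1M : ({σ 0 0} : Finset ι) ⊆ M :=
        Finset.singleton_subset_iff.mpr (hσmem 0 0)
      have hY0sum : ∀ i : Fin 3, ∑ x ∈ ({σ 1 0, σ 2 0} : Finset ι), c i x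
          = c i (σ 1 0) + c i (σ 2 0) :=
        fun i => Finset.sum_pair (htopne 1 2 (by decide))
      have hρ2 : 3/2 * ∑ x ∈ R0, c 2 x < c 2 (σ 0 0) := hE 2 0 (by decide)
      have hc2lt : c 2 (σ 0 0) < 1/9 := hgood 0 2 (by decide)
      refine assemble M c hc 0 1 2 (by decide) (by decide) (by decide)
        ({σ 1 0, σ 2 0}) ({σ 0 0}) R0 hY0M hY1M hR0sub ?_ ?_ ?_ ?_
        ?_ ?_ ?_ ?_ ?_ ?_
      · -- coverage
        intro e he
        by_cases heT : e ∈ T3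
        · simp only [hT3def, Finset.mem_insert, Finset.mem_singleton] at heT
          rcases heT with rfl | rfl | rfl
          · exact Or.inr (Or.inl (by simp))
          · exact Or.inl (by simp)
          · exact Or.inl (by simp)
        · exact Or.inr (Or.inr (by rw [hR0def]; exact Finset.mem_sdiff.mpr ⟨he, heT⟩))
      · -- disjoint Y0 Y1
        refine Finset.disjoint_left.mpr ?_
        intro x hx hx'
        rw [Finset.mem_singleton.mp hx'] at hx
        rcases Finset.mem_insert.mp hx with heq | hx2
        · exact htopne 0 1 (by decide) heq
        · exact htopne 0 2 (by decide) (Finset.mem_singleton.mp hx2)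
      · -- disjoint Y0 R0
        refine Finset.disjoint_left.mpr ?_
        intro x hx hx'
        rcases Finset.mem_insert.mp hx with rfl | hx2
        · exact hnotR0 _ (hmemT3 1) hx'
        · rw [Finset.mem_singleton.mp hx2] at hx'
          exact hnotR0 _ (hmemT3 2) hx'
      · -- disjoint Y1 R0
        refine Finset.disjoint_left.mpr ?_
        intro x hx hx'
        rw [Finset.mem_singleton.mp hx] at hx'
        exact hnotR0 _ (hmemT3 0) hx'
      · -- 0 vs 1
        intro e he
        have h1 := hEr 0 ({σ 1 0, σ 2 0} : Finset ι) hY0M e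
        rw [hY0sum 0] at h1
        rw [Finset.sum_singleton]
        linarith [hforeign 0 1 (by decide), hforeign 0 2 (by decide), hst 0, ht0 0, hs0 0]
      · -- 0 vs 2
        intro e he
        have h1 := hEr 0 ({σ 1 0, σ 2 0} : Finset ι) hY0M e
        rw [hY0sum 0] at h1
        linarith [hforeign 0 1 (by decide), hforeign 0 2 (by decide),
          hρ4s 0, hs0 0]
      · -- 1 vs 0
        intro e he
        have heg : e = σ 0 0 := Finset.mem_singleton.mp he
        subst heg
        rw [Finset.erase_singleton]
        simp only [Finset.sum_empty]
        linarith [hNN 1 _ hY0M]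
      · -- 1 vs 2
        intro e he
        have heg : e = σ 0 0 := Finset.mem_singleton.mp he
        subst heg
        rw [Finset.erase_singleton]
        simp only [Finset.sum_empty]
        linarith [hNN 1 _ hR0sub]
      · -- 2 vs 0
        intro e he
        have h1 := hEr 2 R0 hR0sub e
        rw [hY0sum 2]
        linarith [hρ2, hc2lt, hlarge 2, hc 2 _ (hσmem 1 0)]
      · -- 2 vs 1
        intro e he
        have h1 := hEr 2 R0 hR0sub e
        rw [Finset.sum_singleton]
        linarith [hρ2, hc 2 _ (hσmem 0 0)]
end

section
/- Let there be n ≥ 3 agents and m ≥ n indivisible chores with additive nonnegative cost functions, and suppose agent i satisfies c_i(M_i^-) > 3n²·c_i(σ_i(n−1)). Let b_i = c_i(M_i^-)/(3n² − n + 2) and L_i = {e ∈ M : c_i(e) ≥ b_i}. Then for every allocation X = (X_1,…,X_n) of M and every agent j such that X_i ∩ L_i = ∅ and L_i ∩ X_j ≠ ∅, it holds that c_i(X_i) ≤ 3n²·c_i(X_j). -/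
open Finset

/-!
Since `c_i(σ_i(n-1)) < b_i`, every item of `L_i` is among the `n-1` most costly items `T`
of agent `i`. The item of `L_i` held by `j` is one of them, so `X_i` meets `T` in at most
`n-2` items, each cheaper than `b_i`; the rest of `X_i` lies in `M_i^-`. Hence
`c_i(X_i) ≤ c_i(M_i^-) + (n-2) b_i = 3n² b_i ≤ 3n² c_i(X_j)`.
-/

section

variable {ι : Type*} [DecidableEq ι] {M T X : Finset ι} {c : ι → ℝ}

lemma Finset.image_range_eq_of_injOn {σ : ℕ → ι} {m : ℕ} (hM : #M = m)
    (hmem : ∀ k < m, σ k ∈ M) (hinj : ∀ k < m, ∀ l < m, σ k = σ l → k = l) :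
    (range m).image σ = M := by
  refine eq_of_subset_of_card_le (fun e he => ?_) ?_
  · obtain ⟨k, hk, rfl⟩ := mem_image.1 he
    exact hmem k (mem_range.1 hk)
  · rw [card_image_of_injOn fun k hk l hl => hinj k (mem_range.1 hk) l (mem_range.1 hl),
      card_range, hM]

lemma mem_image_range_of_apply_lt {σ : ℕ → ι} {m r : ℕ} {e : ι}
    (hσ : (range m).image σ = M) (hmono : ∀ k l, k ≤ l → l < m → c (σ l) ≤ c (σ k))
    (he : e ∈ M) (hlt : c (σ r) < c e) : e ∈ (range r).image σ := by
  rw [← hσ] at he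
  obtain ⟨k, hk, rfl⟩ := mem_image.1 he
  refine mem_image.2 ⟨k, mem_range.2 ?_, rfl⟩
  by_contra! hrk
  exact (hmono r k hrk (mem_range.1 hk)).not_gt hlt

lemma sum_le_sum_sdiff_add_card_mul {b : ℝ} {r : ℕ} (hX : X ⊆ M)
    (hc : ∀ e ∈ M, 0 ≤ c e) (hb : 0 ≤ b) (hXb : ∀ e ∈ X, c e ≤ b) (hcard : #(X ∩ T) ≤ r) :
    ∑ e ∈ X, c e ≤ ∑ e ∈ M \ T, c e + r * b := by
  rw [← sum_inter_add_sum_sdiff X T, add_comm]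
  refine add_le_add (sum_le_sum_of_subset_of_nonneg (sdiff_subset_sdiff hX le_rfl)
    fun e he _ => hc e (mem_sdiff.1 he).1) ?_
  calc ∑ e ∈ X ∩ T, c e ≤ #(X ∩ T) * b := by
        simpa using sum_le_card_nsmul _ _ b fun e he => hXb e (mem_inter.1 he).1
    _ ≤ r * b := by gcongr

end

lemma lt_div_of_mul_lt_of_le {a d D S : ℝ} (hD : 0 < D) (hDd : D ≤ d) (hS : 0 ≤ S)
    (h : d * a < S) : a < S / D := by
  rw [lt_div_iff₀ hD]
  rcases le_or_gt 0 a with ha | ha <;> nlinarith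

theorem stmt_8_general {ι : Type*} [DecidableEq ι] (n m : ℕ) (hn : 3 ≤ n)
    (M : Finset ι) (hM : M.card = m)
    (c : Fin n → ι → ℝ) (hc : ∀ i, ∀ e ∈ M, 0 ≤ c i e)
    (σ : Fin n → ℕ → ι)
    (hσmem : ∀ i, ∀ k < m, σ i k ∈ M)
    (hσinj : ∀ i, ∀ k < m, ∀ l < m, σ i k = σ i l → k = l)
    (hσmono : ∀ i, ∀ k l, k ≤ l → l < m → c i (σ i l) ≤ c i (σ i k))
    (i : Fin n)
    (Mi : Finset ι) (hMi : Mi = M \ (Finset.image (σ i) (Finset.range (n - 1))))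
    (hi : ∑ e ∈ Mi, c i e > 3 * (n : ℝ) ^ 2 * c i (σ i (n - 2)))
    (b : ℝ) (hb : b = (∑ e ∈ Mi, c i e) / (3 * (n : ℝ) ^ 2 - (n : ℝ) + 2))
    (L : Finset ι) (hL : ∀ e, e ∈ L ↔ e ∈ M ∧ b ≤ c i e)
    (X : Fin n → Finset ι)
    (hcover : Finset.univ.biUnion X = M)
    (j : Fin n)
    (hXi : X i ∩ L = ∅)
    (hXj : (L ∩ X j).Nonempty) :
    ∑ e ∈ X i, c i e ≤ 3 * (n : ℝ) ^ 2 * ∑ e ∈ X j, c i e := by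
  subst hMi
  set T := (range (n - 1)).image (σ i)
  have hn' : (3 : ℝ) ≤ n := by exact_mod_cast hn
  have hD : (0 : ℝ) < 3 * n ^ 2 - n + 2 := by nlinarith
  have hXM : ∀ k, X k ⊆ M := fun k => hcover ▸ subset_biUnion_of_mem X (mem_univ k)
  have hS : 0 ≤ ∑ e ∈ M \ T, c i e := sum_nonneg fun e he => hc i e (mem_sdiff.1 he).1
  have hSb : ∑ e ∈ M \ T, c i e = (3 * n ^ 2 - n + 2) * b := by
    rw [hb, mul_div_cancel₀ _ hD.ne']
  have hb0 : 0 ≤ b := hb ▸ div_nonneg hS hD.le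
  have hLT : L ⊆ T := fun e he => by
    obtain ⟨heM, hbe⟩ := (hL e).1 he
    have hσb : c i (σ i (n - 2)) < b := hb ▸ lt_div_of_mul_lt_of_le hD (by linarith) hS hi
    exact image_subset_image (range_subset_range.2 (by omega)) <|
      mem_image_range_of_apply_lt (image_range_eq_of_injOn hM (hσmem i) (hσinj i)) (hσmono i)
        heM (hσb.trans_le hbe)
  have hXib : ∀ e ∈ X i, c i e ≤ b := fun e he => by
    by_contra! hlt
    have : e ∈ X i ∩ L := mem_inter.2 ⟨he, (hL e).2 ⟨hXM i he, hlt.le⟩⟩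
    simp [hXi] at this
  obtain ⟨e₀, he₀⟩ := hXj
  obtain ⟨he₀L, he₀j⟩ := mem_inter.1 he₀
  have hcard : #(X i ∩ T) ≤ n - 2 := by
    have hlt : #(X i ∩ T) < #T := card_lt_card <| (ssubset_iff_of_subset inter_subset_right).2
      ⟨_, hLT he₀L, fun h => by simpa [hXi] using mem_inter.2 ⟨(mem_inter.1 h).1, he₀L⟩⟩
    have : #T ≤ n - 1 := card_image_le.trans (card_range _).le
    omega
  calc ∑ e ∈ X i, c i e ≤ ∑ e ∈ M \ T, c i e + ((n - 2 : ℕ) : ℝ) * b :=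
        sum_le_sum_sdiff_add_card_mul (hXM i) (hc i) hb0 hXib hcard
    _ = 3 * n ^ 2 * b := by rw [hSb, Nat.cast_sub (by omega)]; push_cast; ring
    _ ≤ 3 * n ^ 2 * ∑ e ∈ X j, c i e := by
        gcongr
        exact ((hL e₀).1 he₀L).2.trans <|
          single_le_sum (fun e he => hc i e (hXM j he)) he₀j

/-- `n ≥ 3` agents, `m ≥ n` chores, additive nonnegative costs.  `σ i` enumerates
`M` from most to least costly under `c i` (0-indexed, so the paper's `σ_i(k)` is
`σ i (k-1)`), and `M_i^- = M` minus the `n-1` most costly items under `c i`.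
Suppose agent `i` satisfies `c_i(M_i^-) > 3n² · c_i(σ_i(n-1))`.  Let
`b_i = c_i(M_i^-)/(3n² - n + 2)` and `L_i = {e ∈ M : c_i(e) ≥ b_i}`.  Then for
every allocation `X` of `M` and every agent `j` with `X_i ∩ L_i = ∅` and
`L_i ∩ X_j ≠ ∅`, we have `c_i(X_i) ≤ 3n² · c_i(X_j)`. -/
theorem stmt_8 {ι : Type*} [DecidableEq ι] (n m : ℕ) (hn : 3 ≤ n) (hmn : n ≤ m)
    (M : Finset ι) (hM : M.card = m)
    (c : Fin n → ι → ℝ) (hc : ∀ i, ∀ e ∈ M, 0 ≤ c i e)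
    (σ : Fin n → ℕ → ι)
    (hσmem : ∀ i, ∀ k < m, σ i k ∈ M)
    (hσinj : ∀ i, ∀ k < m, ∀ l < m, σ i k = σ i l → k = l)
    (hσmono : ∀ i, ∀ k l, k ≤ l → l < m → c i (σ i l) ≤ c i (σ i k))
    (i : Fin n)
    (Mi : Finset ι) (hMi : Mi = M \ (Finset.image (σ i) (Finset.range (n - 1))))
    (hi : ∑ e ∈ Mi, c i e > 3 * (n : ℝ) ^ 2 * c i (σ i (n - 2)))
    (b : ℝ) (hb : b = (∑ e ∈ Mi, c i e) / (3 * (n : ℝ) ^ 2 - (n : ℝ) + 2))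
    (L : Finset ι) (hL : ∀ e, e ∈ L ↔ e ∈ M ∧ b ≤ c i e)
    (X : Fin n → Finset ι)
    (hdisj : ∀ j k, j ≠ k → Disjoint (X j) (X k))
    (hcover : Finset.univ.biUnion X = M)
    (j : Fin n)
    (hXi : X i ∩ L = ∅)
    (hXj : (L ∩ X j).Nonempty) :
    ∑ e ∈ X i, c i e ≤ 3 * (n : ℝ) ^ 2 * ∑ e ∈ X j, c i e :=
  stmt_8_general n m hn M hM c hc σ hσmem hσinj hσmono i Mi hMi hi b hb L hL X hcover j hXi hXj
end

section
/- Let there be n ≥ 3 agents and m ≥ n indivisible chores with additive nonnegative cost functions, and suppose every agent i satisfies c_i(M_i^-) > 3n²·c_i(σ_i(n−1)). For each agent i let b_i = c_i(M_i^-)/(3n² − n + 2) and L_i = {e ∈ M : c_i(e) ≥ b_i}, let L = ∪_{i} L_i, and let M^- = M \ L. Then for every agent i and every item e ∈ M^-, c_i(e) ≤ c_i(M^-)/(2n² + 2n). -/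
open Finset

/-- `n ≥ 3` agents, `m ≥ n` chores, additive nonnegative costs.  `σ i` enumerates
`M` from most to least costly under `c i` (0-indexed), and `M_i^- = M` minus the
`n-1` most costly items under `c i`.  Suppose every agent `i` satisfies
`c_i(M_i^-) > 3n² · c_i(σ_i(n-1))`.  With `b_i = c_i(M_i^-)/(3n² - n + 2)`,
`L_i = {e ∈ M : c_i(e) ≥ b_i}`, `L = ∪_i L_i` and `M^- = M \ L`, every agent `i`
and item `e ∈ M^-` satisfy `c_i(e) ≤ c_i(M^-)/(2n² + 2n)`. -/
theorem stmt_9 {ι : Type*} [DecidableEq ι] (n m : ℕ) (hn : 3 ≤ n) (hmn : n ≤ m)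
    (M : Finset ι) (hM : M.card = m)
    (c : Fin n → ι → ℝ) (hc : ∀ i, ∀ e ∈ M, 0 ≤ c i e)
    (σ : Fin n → ℕ → ι)
    (hσmem : ∀ i, ∀ k < m, σ i k ∈ M)
    (hσinj : ∀ i, ∀ k < m, ∀ l < m, σ i k = σ i l → k = l)
    (hσmono : ∀ i, ∀ k l, k ≤ l → l < m → c i (σ i l) ≤ c i (σ i k))
    (Mi : Fin n → Finset ι)
    (hMi : ∀ i, Mi i = M \ (Finset.image (σ i) (Finset.range (n - 1))))
    (hbig : ∀ i, ∑ e ∈ Mi i, c i e > 3 * (n : ℝ) ^ 2 * c i (σ i (n - 2)))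
    (b : Fin n → ℝ)
    (hb : ∀ i, b i = (∑ e ∈ Mi i, c i e) / (3 * (n : ℝ) ^ 2 - (n : ℝ) + 2))
    (L : Fin n → Finset ι)
    (hL : ∀ i e, e ∈ L i ↔ e ∈ M ∧ b i ≤ c i e)
    (Mneg : Finset ι) (hMneg : Mneg = M \ Finset.univ.biUnion L) :
    ∀ i : Fin n, ∀ e ∈ Mneg,
      c i e ≤ (∑ f ∈ Mneg, c i f) / (2 * (n : ℝ) ^ 2 + 2 * (n : ℝ)) := by
  intro i e he
  have hn3 : (3 : ℝ) ≤ (n : ℝ) := by exact_mod_cast hn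
  have hn2m : n - 2 < m := by omega
  -- surjectivity of σ j onto M
  have hsurj : ∀ j : Fin n, ∀ x ∈ M, ∃ k, k < m ∧ σ j k = x := by
    intro j x hx
    have himg : (Finset.range m).image (σ j) = M := by
      apply Finset.eq_of_subset_of_card_le
      · intro y hy
        simp only [Finset.mem_image, Finset.mem_range] at hy
        obtain ⟨k, hk, rfl⟩ := hy
        exact hσmem j k hk
      · rw [hM, Finset.card_image_of_injOn]
        · simp
        · intro a ha b hb' hab
          exact hσinj j a (Finset.mem_range.mp ha) b (Finset.mem_range.mp hb') hab
    rw [← himg] at hx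
    simp only [Finset.mem_image, Finset.mem_range] at hx
    obtain ⟨k, hk, hkx⟩ := hx
    exact ⟨k, hk, hkx⟩
  -- positivity of denominators
  have hD : (0 : ℝ) < 3 * (n : ℝ) ^ 2 - (n : ℝ) + 2 := by nlinarith
  have hE : (0 : ℝ) < 2 * (n : ℝ) ^ 2 + 2 * (n : ℝ) := by nlinarith
  -- everything in Mi j costs at most c j (σ j (n-2))
  have htop : ∀ j : Fin n, ∀ x ∈ Mi j, c j x ≤ c j (σ j (n - 2)) := by
    intro j x hx
    rw [hMi] at hx
    obtain ⟨hxM, hxnot⟩ := Finset.mem_sdiff.mp hx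
    obtain ⟨k, hk, rfl⟩ := hsurj j x hxM
    have hk' : n - 1 ≤ k := by
      by_contra h
      exact hxnot (Finset.mem_image.mpr ⟨k, Finset.mem_range.mpr (by omega), rfl⟩)
    exact hσmono j (n - 2) k (by omega) hk
  -- the top-of-Mi item costs less than b j
  have hbt : ∀ j : Fin n, c j (σ j (n - 2)) < b j := by
    intro j
    rw [hb, lt_div_iff₀ hD]
    have h1 := hbig j
    have h2 : 0 ≤ c j (σ j (n - 2)) := hc j _ (hσmem j (n - 2) hn2m)
    nlinarith
  -- L j is contained in the top n-2 items of j
  have hLj : ∀ j : Fin n, L j ⊆ (Finset.range (n - 2)).image (σ j) := by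
    intro j x hx
    obtain ⟨hxM, hbx⟩ := (hL j x).mp hx
    obtain ⟨k, hk, rfl⟩ := hsurj j x hxM
    refine Finset.mem_image.mpr ⟨k, Finset.mem_range.mpr ?_, rfl⟩
    by_contra h
    have h1 : c j (σ j k) ≤ c j (σ j (n - 2)) := hσmono j (n - 2) k (by omega) hk
    have h2 := hbt j
    linarith
  have hLcard : ∀ j : Fin n, (L j).card ≤ n - 2 := by
    intro j
    calc (L j).card ≤ ((Finset.range (n - 2)).image (σ j)).card :=
          Finset.card_le_card (hLj j)
      _ ≤ (Finset.range (n - 2)).card := Finset.card_image_le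
      _ = n - 2 := Finset.card_range _
  set K : Finset ι := Finset.univ.biUnion L with hK
  -- L i does not meet Mi i, so Mi i ∩ K ⊆ union over j ≠ i
  have hKsub : Mi i ∩ K ⊆ (Finset.univ.erase i).biUnion L := by
    intro x hx
    obtain ⟨hxMi, hxK⟩ := Finset.mem_inter.mp hx
    obtain ⟨j, _, hxLj⟩ := Finset.mem_biUnion.mp hxK
    have hji : j ≠ i := by
      rintro rfl
      have h1 : x ∈ (Finset.range (n - 2)).image (σ j) := hLj j hxLj
      rw [hMi] at hxMi
      have h2 := (Finset.mem_sdiff.mp hxMi).2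
      apply h2
      obtain ⟨k, hk, rfl⟩ := Finset.mem_image.mp h1
      exact Finset.mem_image.mpr ⟨k, Finset.mem_range.mpr (by
        have := Finset.mem_range.mp hk; omega), rfl⟩
    exact Finset.mem_biUnion.mpr ⟨j, Finset.mem_erase.mpr ⟨hji, Finset.mem_univ j⟩, hxLj⟩
  have hcard : (Mi i ∩ K).card ≤ (n - 1) * (n - 2) := by
    calc (Mi i ∩ K).card ≤ ((Finset.univ.erase i).biUnion L).card :=
          Finset.card_le_card hKsub
      _ ≤ ∑ j ∈ Finset.univ.erase i, (L j).card := Finset.card_biUnion_le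
      _ ≤ ∑ j ∈ Finset.univ.erase i, (n - 2) := Finset.sum_le_sum fun j _ => hLcard j
      _ = (n - 1) * (n - 2) := by
          rw [Finset.sum_const, smul_eq_mul, Finset.card_erase_of_mem (Finset.mem_univ i)]
          simp
  -- cost of the intersection is small
  have ht0 : 0 ≤ c i (σ i (n - 2)) := hc i _ (hσmem i (n - 2) hn2m)
  have hinter : ∑ x ∈ Mi i ∩ K, c i x ≤ ((n : ℝ) - 1) * ((n : ℝ) - 2) * c i (σ i (n - 2)) := by
    calc ∑ x ∈ Mi i ∩ K, c i x ≤ (Mi i ∩ K).card • c i (σ i (n - 2)) :=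
          Finset.sum_le_card_nsmul _ _ _ (fun x hx => htop i x (Finset.mem_inter.mp hx).1)
      _ = ((Mi i ∩ K).card : ℝ) * c i (σ i (n - 2)) := by rw [nsmul_eq_mul]
      _ ≤ (((n - 1) * (n - 2) : ℕ) : ℝ) * c i (σ i (n - 2)) := by
          apply mul_le_mul_of_nonneg_right _ ht0
          exact_mod_cast hcard
      _ = ((n : ℝ) - 1) * ((n : ℝ) - 2) * c i (σ i (n - 2)) := by
          rw [Nat.cast_mul, Nat.cast_sub (by omega : 1 ≤ n), Nat.cast_sub (by omega : 2 ≤ n)]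
          norm_num
  -- Mi i \ K contributes to Mneg
  have hMisub : Mi i ⊆ M := by rw [hMi]; exact Finset.sdiff_subset
  have hsubset : Mi i \ K ⊆ Mneg := by
    rw [hMneg]
    intro x hx
    obtain ⟨hx1, hx2⟩ := Finset.mem_sdiff.mp hx
    exact Finset.mem_sdiff.mpr ⟨hMisub hx1, hx2⟩
  have hMnegM : Mneg ⊆ M := by rw [hMneg]; exact Finset.sdiff_subset
  have hSge : ∑ x ∈ Mi i \ K, c i x ≤ ∑ f ∈ Mneg, c i f :=
    Finset.sum_le_sum_of_subset_of_nonneg hsubset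
      (fun x hx _ => hc i x (hMnegM hx))
  have hsplit : ∑ x ∈ Mi i ∩ K, c i x + ∑ x ∈ Mi i \ K, c i x = ∑ x ∈ Mi i, c i x :=
    Finset.sum_inter_add_sum_sdiff _ _ _
  -- c i e < b i since e ∉ L i
  have heM : e ∈ M := hMnegM he
  have heK : e ∉ K := by
    rw [hMneg] at he
    exact (Finset.mem_sdiff.mp he).2
  have heLi : e ∉ L i := fun h => heK (Finset.mem_biUnion.mpr ⟨i, Finset.mem_univ i, h⟩)
  have hce : c i e < b i := by
    by_contra h
    exact heLi ((hL i e).mpr ⟨heM, le_of_not_gt h⟩)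
  -- final arithmetic
  set N : ℝ := (n : ℝ)
  set C : ℝ := ∑ x ∈ Mi i, c i x
  set S : ℝ := ∑ f ∈ Mneg, c i f
  set t : ℝ := c i (σ i (n - 2))
  have h1 : c i e * (3 * N ^ 2 - N + 2) < C := by
    rw [hb] at hce
    calc c i e * (3 * N ^ 2 - N + 2) < C / (3 * N ^ 2 - N + 2) * (3 * N ^ 2 - N + 2) := by
          exact mul_lt_mul_of_pos_right hce hD
      _ = C := div_mul_cancel₀ _ (ne_of_gt hD)
  have h2 : 3 * N ^ 2 * t < C := hbig i
  have h4 : C - (N - 1) * (N - 2) * t ≤ S := by linarith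
  have h5 : 0 ≤ c i e := hc i e heM
  rw [le_div_iff₀ hE]
  have hK2 : (0:ℝ) ≤ (N - 1) * (N - 2) := by nlinarith
  have hC0 : 0 ≤ C := by nlinarith
  have h3N : (0:ℝ) < 3 * N ^ 2 := by positivity
  have h6 : (2 * N ^ 2 + 3 * N - 2) * C ≤ 3 * N ^ 2 * S := by
    nlinarith [mul_le_mul_of_nonneg_left h2.le hK2, mul_le_mul_of_nonneg_left h4 h3N.le]
  have hpoly : (2 * N ^ 2 + 2 * N) * (3 * N ^ 2) ≤ (2 * N ^ 2 + 3 * N - 2) * (3 * N ^ 2 - N + 2) := by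
    nlinarith [mul_nonneg (by linarith : (0:ℝ) ≤ N - 1) (sq_nonneg (N - 2))]
  have hA : c i e * (3 * N ^ 2 - N + 2) * ((2 * N ^ 2 + 2 * N) * (3 * N ^ 2)) ≤
      C * ((2 * N ^ 2 + 2 * N) * (3 * N ^ 2)) :=
    mul_le_mul_of_nonneg_right h1.le (by positivity)
  have hB : C * ((2 * N ^ 2 + 2 * N) * (3 * N ^ 2)) ≤
      C * ((2 * N ^ 2 + 3 * N - 2) * (3 * N ^ 2 - N + 2)) :=
    mul_le_mul_of_nonneg_left hpoly hC0
  have hCc : (2 * N ^ 2 + 3 * N - 2) * C * (3 * N ^ 2 - N + 2) ≤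
      3 * N ^ 2 * S * (3 * N ^ 2 - N + 2) :=
    mul_le_mul_of_nonneg_right h6 hD.le
  have h8 : c i e * (2 * N ^ 2 + 2 * N) * (3 * N ^ 2 * (3 * N ^ 2 - N + 2)) ≤
      S * (3 * N ^ 2 * (3 * N ^ 2 - N + 2)) := by nlinarith [hA, hB, hCc]
  exact le_of_mul_le_mul_right h8 (mul_pos h3N hD)
end

section
/- Let n ≥ 1 and let 1 ≤ t ≤ n. Given a finite set M' of items and t agents each with an additive nonnegative cost function c_i on M', if for every agent i ∈ {1,…,t} and every item e ∈ M' it holds that c_i(e) ≤ c_i(M')/(2n² + 2n), then there exists a partition (S_1, S_2, …, S_t) of M' into t pairwise disjoint bundles such that for all agents i and all indices j ∈ {1,…,t}, c_i(S_j) ≥ c_i(M')/(2n² + 2n). -/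
open Finset

lemma exists_dep {ι : Type*} [DecidableEq ι] {t : ℕ} (F : Finset ι) (c : Fin t → ι → ℝ)
    (hbig : t < F.card) :
    ∃ g : ι → ℝ, (∀ e ∉ F, g e = 0) ∧ (∃ e ∈ F, g e ≠ 0) ∧
      ∀ i, ∑ e ∈ F, g e * c i e = 0 := by
  have hnli : ¬ LinearIndependent ℝ (fun (e : {x // x ∈ F}) => (fun i => c i e.1 : Fin t → ℝ)) := by
    intro h
    have h2 := h.fintype_card_le_finrank
    rw [Module.finrank_fintype_fun_eq_card, Fintype.card_coe, Fintype.card_fin] at h2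
    omega
  obtain ⟨g, hg0, e0, hge0⟩ := Fintype.not_linearIndependent_iff.mp hnli
  refine ⟨fun e => if h : e ∈ F then g ⟨e, h⟩ else 0, fun e he => dif_neg he,
    ⟨e0.1, e0.2, by simpa using hge0⟩, fun i => ?_⟩
  have key : ∑ e : {x // x ∈ F}, g e * c i e.1 = 0 := by
    have := congrFun hg0 i
    simpa [Finset.sum_apply] using this
  calc ∑ e ∈ F, (if h : e ∈ F then g ⟨e, h⟩ else 0) * c i e
      = ∑ e ∈ F.attach, (if h : e.1 ∈ F then g ⟨e.1, h⟩ else 0) * c i e.1 :=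
        (Finset.sum_attach _ _).symm
    _ = ∑ e ∈ F.attach, g e * c i e.1 := by
        refine Finset.sum_congr rfl fun e _ => ?_
        rw [dif_pos e.2]
    _ = 0 := by rw [← Finset.univ_eq_attach]; exact key

/-- Base case of the rounding lemma: few fractional coordinates. -/
lemma roundingA_base {ι : Type*} [DecidableEq ι] (t : ℕ) (R : Finset ι)
    (c : Fin t → ι → ℝ) (d : Fin t → ℝ) (hd0 : ∀ i, 0 ≤ d i)
    (hc : ∀ i, ∀ e ∈ R, 0 ≤ c i e) (hd : ∀ i, ∀ e ∈ R, c i e ≤ d i)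
    (x : ι → ℝ) (hx0 : ∀ e ∈ R, 0 ≤ x e) (hx1 : ∀ e ∈ R, x e ≤ 1)
    (hfew : (R.filter fun e => x e ≠ 0 ∧ x e ≠ 1).card ≤ t) :
    ∃ B ⊆ R, ∀ i,
      (∑ e ∈ R, x e * c i e) - t * d i ≤ ∑ e ∈ B, c i e ∧
      ∑ e ∈ B, c i e ≤ ∑ e ∈ R, x e * c i e := by
  refine ⟨R.filter fun e => x e = 1, Finset.filter_subset _ _, fun i => ?_⟩
  set B := R.filter fun e => x e = 1 with hB
  have hBeq : ∑ e ∈ B, c i e = ∑ e ∈ B, x e * c i e := by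
    refine Finset.sum_congr rfl fun e he => ?_
    rw [(Finset.mem_filter.mp he).2, one_mul]
  have hsplit : ∑ e ∈ B, x e * c i e + ∑ e ∈ R.filter (fun e => ¬ x e = 1), x e * c i e
      = ∑ e ∈ R, x e * c i e := Finset.sum_filter_add_sum_filter_not _ _ _
  have hrest : ∑ e ∈ R.filter (fun e => ¬ x e = 1), x e * c i e ≤ t * d i := by
    have hsub : (R.filter fun e => x e ≠ 0 ∧ x e ≠ 1) ⊆ R.filter (fun e => ¬ x e = 1) := by
      intro e he
      rw [Finset.mem_filter] at he ⊢
      exact ⟨he.1, he.2.2⟩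
    have hzero : ∀ e ∈ R.filter (fun e => ¬ x e = 1),
        e ∉ (R.filter fun e => x e ≠ 0 ∧ x e ≠ 1) → x e * c i e = 0 := by
      intro e he hne
      rw [Finset.mem_filter] at he
      rw [Finset.mem_filter] at hne
      push_neg at hne
      have hx : x e = 0 := by
        by_contra hx'
        exact he.2 (hne he.1 hx')
      rw [hx, zero_mul]
    have h1 : ∑ e ∈ R.filter (fun e => ¬ x e = 1), x e * c i e
        = ∑ e ∈ R.filter (fun e => x e ≠ 0 ∧ x e ≠ 1), x e * c i e :=
      (Finset.sum_subset hsub hzero).symm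
    have h2 : ∑ e ∈ R.filter (fun e => x e ≠ 0 ∧ x e ≠ 1), x e * c i e
        ≤ ∑ _e ∈ R.filter (fun e => x e ≠ 0 ∧ x e ≠ 1), d i := by
      refine Finset.sum_le_sum fun e he => ?_
      have heR := Finset.mem_filter.mp he |>.1
      calc x e * c i e ≤ c i e := mul_le_of_le_one_left (hc i e heR) (hx1 e heR)
        _ ≤ d i := hd i e heR
    have h3 : ∑ _e ∈ R.filter (fun e => x e ≠ 0 ∧ x e ≠ 1), d i ≤ t * d i := by
      rw [Finset.sum_const, nsmul_eq_mul]
      exact mul_le_mul_of_nonneg_right (by exact_mod_cast hfew) (hd0 i)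
    linarith
  have hnn : ∀ e ∈ R, 0 ≤ x e * c i e := fun e he => mul_nonneg (hx0 e he) (hc i e he)
  constructor
  · rw [hBeq]; linarith
  · rw [hBeq]
    exact Finset.sum_le_sum_of_subset_of_nonneg (Finset.filter_subset _ _)
      (fun e he _ => hnn e he)

/-- Rounding lemma: a fractional selection can be rounded to a subset, losing at most
`t` items' worth for each agent, and never exceeding the fractional value. -/
lemma roundingA {ι : Type*} [DecidableEq ι] (t : ℕ) (R : Finset ι)
    (c : Fin t → ι → ℝ) (d : Fin t → ℝ) (hd0 : ∀ i, 0 ≤ d i)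
    (hc : ∀ i, ∀ e ∈ R, 0 ≤ c i e) (hd : ∀ i, ∀ e ∈ R, c i e ≤ d i) :
    ∀ (N : ℕ) (x : ι → ℝ), (∀ e ∈ R, 0 ≤ x e) → (∀ e ∈ R, x e ≤ 1) →
      (R.filter fun e => x e ≠ 0 ∧ x e ≠ 1).card ≤ N →
    ∃ B ⊆ R, ∀ i,
      (∑ e ∈ R, x e * c i e) - t * d i ≤ ∑ e ∈ B, c i e ∧
      ∑ e ∈ B, c i e ≤ ∑ e ∈ R, x e * c i e := by
  intro N
  induction N with
  | zero =>
    intro x hx0 hx1 hcard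
    exact roundingA_base t R c d hd0 hc hd x hx0 hx1 (le_trans hcard (Nat.zero_le t))
  | succ N IH =>
    intro x hx0 hx1 hcard
    set F := R.filter fun e => x e ≠ 0 ∧ x e ≠ 1 with hF
    by_cases hfew : F.card ≤ t
    · exact roundingA_base t R c d hd0 hc hd x hx0 hx1 hfew
    push_neg at hfew
    obtain ⟨z, hzF, ⟨ew, hewF, hzew⟩, hzsum⟩ := exists_dep F c hfew
    have hFR : F ⊆ R := Finset.filter_subset _ _
    -- fractional coordinates are strictly between 0 and 1
    have hFx : ∀ e ∈ F, 0 < x e ∧ x e < 1 := by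
      intro e he
      rw [hF, Finset.mem_filter] at he
      exact ⟨lt_of_le_of_ne (hx0 e he.1) (Ne.symm he.2.1),
        lt_of_le_of_ne (hx1 e he.1) he.2.2⟩
    set P := F.filter fun e => z e ≠ 0 with hP
    have hPne : P.Nonempty := ⟨ew, Finset.mem_filter.mpr ⟨hewF, hzew⟩⟩
    set b : ι → ℝ := fun e => if 0 < z e then (1 - x e) / z e else x e / (-z e) with hb
    obtain ⟨e₀, he₀P, hmin⟩ := P.exists_min_image b hPne
    have he₀F : e₀ ∈ F := (Finset.mem_filter.mp he₀P).1
    have hze₀ : z e₀ ≠ 0 := (Finset.mem_filter.mp he₀P).2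
    set s := b e₀ with hs
    have hbnn : ∀ e ∈ P, 0 ≤ b e := by
      intro e heP
      have heF := (Finset.mem_filter.mp heP).1
      have hze := (Finset.mem_filter.mp heP).2
      by_cases hz : 0 < z e
      · rw [hb]; simp only [if_pos hz]
        exact div_nonneg (by linarith [(hFx e heF).2]) hz.le
      · rw [hb]; simp only [if_neg hz]
        have hzneg : z e < 0 := lt_of_le_of_ne (not_lt.mp hz) hze
        exact div_nonneg (hFx e heF).1.le (by linarith)
    have hs0 : 0 ≤ s := hbnn e₀ he₀P
    set x' : ι → ℝ := fun e => x e + s * z e with hx'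
    -- membership in P from nonzero z
    have hmemP : ∀ e, z e ≠ 0 → e ∈ P := by
      intro e hze
      by_cases heF : e ∈ F
      · exact Finset.mem_filter.mpr ⟨heF, hze⟩
      · exact absurd (hzF e heF) hze
    -- bounds for x'
    have hx'bound : ∀ e ∈ R, 0 ≤ x' e ∧ x' e ≤ 1 := by
      intro e heR
      by_cases hze : z e = 0
      · rw [hx']; simp only [hze, mul_zero, add_zero]
        exact ⟨hx0 e heR, hx1 e heR⟩
      · have heP := hmemP e hze
        have hsb := hmin e heP
        by_cases hz : 0 < z e
        · have hbe : b e = (1 - x e) / z e := by rw [hb]; simp [if_pos hz]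
          have h1 : s * z e ≤ 1 - x e := by
            rw [hbe] at hsb
            calc s * z e ≤ ((1 - x e) / z e) * z e :=
                  mul_le_mul_of_nonneg_right hsb hz.le
              _ = 1 - x e := div_mul_cancel₀ _ hze
          constructor
          · have : 0 ≤ s * z e := mul_nonneg hs0 hz.le
            rw [hx']; dsimp only; linarith [hx0 e heR]
          · rw [hx']; dsimp only; linarith
        · have hzneg : z e < 0 := lt_of_le_of_ne (not_lt.mp hz) hze
          have hbe : b e = x e / (-z e) := by rw [hb]; simp [if_neg hz]
          have h1 : s * (-z e) ≤ x e := by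
            rw [hbe] at hsb
            calc s * (-z e) ≤ (x e / (-z e)) * (-z e) :=
                  mul_le_mul_of_nonneg_right hsb (by linarith)
              _ = x e := div_mul_cancel₀ _ (by linarith)
          constructor
          · rw [hx']; dsimp only; nlinarith
          · have : s * z e ≤ 0 := mul_nonpos_of_nonneg_of_nonpos hs0 hzneg.le
            rw [hx']; dsimp only; linarith [hx1 e heR]
    -- x' e₀ is integral
    have hx'e₀ : x' e₀ = 1 ∨ x' e₀ = 0 := by
      by_cases hz : 0 < z e₀
      · left
        have hbe : s = (1 - x e₀) / z e₀ := by rw [hs, hb]; simp [if_pos hz]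
        rw [hx']; dsimp only; rw [hbe, div_mul_cancel₀ _ hze₀]; ring
      · right
        have hbe : s = x e₀ / (-z e₀) := by rw [hs, hb]; simp [if_neg hz]
        rw [hx']; dsimp only; rw [hbe]
        have h' : x e₀ / -z e₀ * z e₀ = - x e₀ := by
          rw [div_mul_eq_mul_div, div_neg, mul_div_assoc, div_self hze₀, mul_one]
        rw [h']; ring
    -- new fractional set is smaller
    have hcard' : (R.filter fun e => x' e ≠ 0 ∧ x' e ≠ 1).card ≤ N := by
      have hsub : (R.filter fun e => x' e ≠ 0 ∧ x' e ≠ 1) ⊆ F.erase e₀ := by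
        intro e he
        rw [Finset.mem_filter] at he
        obtain ⟨heR, he0, he1⟩ := he
        have hne₀ : e ≠ e₀ := by
          rintro rfl
          rcases hx'e₀ with h | h
          · exact he1 h
          · exact he0 h
        refine Finset.mem_erase.mpr ⟨hne₀, ?_⟩
        by_cases hze : z e = 0
        · have hxx : x' e = x e := by rw [hx']; simp [hze]
          rw [hF, Finset.mem_filter]
          exact ⟨heR, by rw [← hxx]; exact he0, by rw [← hxx]; exact he1⟩
        · exact (Finset.mem_filter.mp (hmemP e hze)).1
      calc (R.filter fun e => x' e ≠ 0 ∧ x' e ≠ 1).card ≤ (F.erase e₀).card :=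
            Finset.card_le_card hsub
        _ = F.card - 1 := Finset.card_erase_of_mem he₀F
        _ ≤ N := by omega
    -- sums are preserved
    have hsump : ∀ i, ∑ e ∈ R, x' e * c i e = ∑ e ∈ R, x e * c i e := by
      intro i
      have hzR : ∑ e ∈ R, z e * c i e = 0 := by
        have : ∑ e ∈ F, z e * c i e = ∑ e ∈ R, z e * c i e := by
          refine Finset.sum_subset hFR fun e heR heF => ?_
          rw [hzF e heF, zero_mul]
        rw [← this]; exact hzsum i
      calc ∑ e ∈ R, x' e * c i e = ∑ e ∈ R, (x e * c i e + s * (z e * c i e)) := by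
            refine Finset.sum_congr rfl fun e _ => ?_
            rw [hx']; ring
        _ = ∑ e ∈ R, x e * c i e + s * ∑ e ∈ R, z e * c i e := by
            rw [Finset.sum_add_distrib, Finset.mul_sum]
        _ = ∑ e ∈ R, x e * c i e := by rw [hzR, mul_zero, add_zero]
    obtain ⟨B, hBR, hB⟩ := IH x' (fun e he => (hx'bound e he).1) (fun e he => (hx'bound e he).2)
      hcard'
    refine ⟨B, hBR, fun i => ?_⟩
    have := hB i
    rw [hsump i] at this
    exact this

/-- Splitting lemma: any finite set of items, each costing at most `d i` to agent `i`,
can be split into `k` parts each worth at least `total/k - t*d i` to every agent. -/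
lemma splitB {ι : Type*} [DecidableEq ι] (t : ℕ) (c : Fin t → ι → ℝ) (d : Fin t → ℝ)
    (hd0 : ∀ i, 0 ≤ d i)
    (roundA : ∀ (R : Finset ι), (∀ i, ∀ e ∈ R, 0 ≤ c i e) → (∀ i, ∀ e ∈ R, c i e ≤ d i) →
      ∀ (x : ι → ℝ), (∀ e ∈ R, 0 ≤ x e) → (∀ e ∈ R, x e ≤ 1) →
      ∃ B ⊆ R, ∀ i,
        (∑ e ∈ R, x e * c i e) - t * d i ≤ ∑ e ∈ B, c i e ∧
        ∑ e ∈ B, c i e ≤ ∑ e ∈ R, x e * c i e) :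
    ∀ (k : ℕ) (R : Finset ι), (∀ i, ∀ e ∈ R, 0 ≤ c i e) → (∀ i, ∀ e ∈ R, c i e ≤ d i) →
    ∃ S : Fin (k + 1) → Finset ι,
      (∀ j l, j ≠ l → Disjoint (S j) (S l)) ∧
      (Finset.univ.biUnion S = R) ∧
      ∀ i j, (∑ e ∈ R, c i e) / (k + 1 : ℝ) - t * d i ≤ ∑ e ∈ S j, c i e := by
  intro k
  induction k with
  | zero =>
    intro R hc hd
    refine ⟨fun _ => R, fun j l hjl => absurd (by have := j.isLt; have := l.isLt; exact Fin.ext (by omega)) hjl, ?_, ?_⟩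
    · ext a; simp
    · intro i j
      have h1 : (0:ℝ) ≤ t * d i := mul_nonneg (Nat.cast_nonneg t) (hd0 i)
      simp only [Nat.cast_zero, zero_add, div_one]
      linarith
  | succ k IH =>
    intro R hc hd
    -- peel off one bundle of fractional size 1/(k+2)
    obtain ⟨B, hBR, hB⟩ := roundA R hc hd (fun _ => ((k:ℝ) + 2)⁻¹)
      (fun _ _ => by positivity) (fun _ _ => by
        rw [inv_le_one_iff₀]; right; linarith [Nat.cast_nonneg (α := ℝ) k])
    have hsum : ∀ i, ∑ e ∈ R, ((k:ℝ) + 2)⁻¹ * c i e = (∑ e ∈ R, c i e) / ((k:ℝ) + 2) := by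
      intro i
      rw [← Finset.mul_sum, inv_mul_eq_div]
    obtain ⟨P, hPdis, hPun, hPbd⟩ := IH (R \ B)
      (fun i e he => hc i e (Finset.mem_sdiff.mp he).1)
      (fun i e he => hd i e (Finset.mem_sdiff.mp he).1)
    have hPsub : ∀ l, P l ⊆ R \ B := by
      intro l
      rw [← hPun]
      exact Finset.subset_biUnion_of_mem P (Finset.mem_univ l)
    refine ⟨Fin.cons B P, ?_, ?_, ?_⟩
    · intro j l hjl
      induction j using Fin.cases with
      | zero =>
        induction l using Fin.cases with
        | zero => exact absurd rfl hjl
        | succ l =>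
          simp only [Fin.cons_zero, Fin.cons_succ]
          exact Finset.disjoint_of_subset_right (hPsub l) Finset.disjoint_sdiff
      | succ j =>
        induction l using Fin.cases with
        | zero =>
          simp only [Fin.cons_zero, Fin.cons_succ]
          exact (Finset.disjoint_of_subset_right (hPsub j) Finset.disjoint_sdiff).symm
        | succ l =>
          simp only [Fin.cons_succ]
          exact hPdis j l (fun h => hjl (by rw [h]))
    · have : Finset.univ.biUnion (Fin.cons B P) = B ∪ Finset.univ.biUnion P := by
        ext a
        simp only [Finset.mem_biUnion, Finset.mem_univ, true_and, Finset.mem_union]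
        constructor
        · rintro ⟨j, hj⟩
          induction j using Fin.cases with
          | zero => left; simpa using hj
          | succ j => right; exact ⟨j, by simpa using hj⟩
        · rintro (h | ⟨j, hj⟩)
          · exact ⟨0, by simpa using h⟩
          · exact ⟨j.succ, by simpa using hj⟩
      rw [this, hPun, Finset.union_sdiff_of_subset hBR]
    · intro i j
      have hcast : ((k:ℝ) + 1 + 1) = (k:ℝ) + 2 := by ring
      have hk2 : (0:ℝ) < (k:ℝ) + 2 := by positivity
      have hk1 : (0:ℝ) < (k:ℝ) + 1 := by positivity
      have hBlow := (hB i).1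
      have hBhigh := (hB i).2
      rw [hsum i] at hBlow hBhigh
      induction j using Fin.cases with
      | zero =>
        simp only [Fin.cons_zero]
        push_cast
        rw [hcast]
        exact hBlow
      | succ j =>
        simp only [Fin.cons_succ]
        have hpb := hPbd i j
        have hsd : ∑ e ∈ R \ B, c i e = ∑ e ∈ R, c i e - ∑ e ∈ B, c i e :=
          Finset.sum_sdiff_eq_sub hBR
        have h2 : (∑ e ∈ R, c i e) / ((k:ℝ) + 2) ≤ (∑ e ∈ R \ B, c i e) / ((k:ℝ) + 1) := by
          rw [div_le_div_iff₀ hk2 hk1, hsd]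
          have h3 : (∑ e ∈ B, c i e) * ((k:ℝ) + 2) ≤ ∑ e ∈ R, c i e := by
            rw [← le_div_iff₀ hk2]
            exact hBhigh
          nlinarith
        push_cast
        rw [hcast]
        linarith

/-- Let `n ≥ 1` and `1 ≤ t ≤ n`.  Given a finite set `M'` of items and `t` agents
with additive nonnegative cost functions, if every item costs every agent at most
`c_i(M')/(2n² + 2n)`, then there exists a `t`-partition `(S_1, …, S_t)` of `M'`
such that `c_i(S_j) ≥ c_i(M')/(2n² + 2n)` for all agents `i` and indices `j`. -/
theorem stmt_10 {ι : Type*} [DecidableEq ι] (n t : ℕ) (hn : 1 ≤ n)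
    (ht : 1 ≤ t) (htn : t ≤ n)
    (M' : Finset ι) (c : Fin t → ι → ℝ) (hc : ∀ i, ∀ e ∈ M', 0 ≤ c i e)
    (hsmall : ∀ i, ∀ e ∈ M',
      c i e ≤ (∑ f ∈ M', c i f) / (2 * (n : ℝ) ^ 2 + 2 * (n : ℝ))) :
    ∃ S : Fin t → Finset ι,
      (∀ j k, j ≠ k → Disjoint (S j) (S k)) ∧
      (Finset.univ.biUnion S = M') ∧
      (∀ i j : Fin t,
        (∑ f ∈ M', c i f) / (2 * (n : ℝ) ^ 2 + 2 * (n : ℝ)) ≤ ∑ f ∈ S j, c i f) := by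
  obtain ⟨k, rfl⟩ : ∃ k, t = k + 1 := ⟨t - 1, by omega⟩
  set D : ℝ := 2 * (n : ℝ) ^ 2 + 2 * (n : ℝ) with hD
  have hn1 : (1:ℝ) ≤ (n:ℝ) := by exact_mod_cast hn
  have hDpos : 0 < D := by rw [hD]; nlinarith
  set d : Fin (k + 1) → ℝ := fun i => (∑ f ∈ M', c i f) / D with hd
  have hT0 : ∀ i, 0 ≤ ∑ f ∈ M', c i f := fun i => Finset.sum_nonneg (fun e he => hc i e he)
  have hd0 : ∀ i, 0 ≤ d i := fun i => div_nonneg (hT0 i) hDpos.le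
  have hdsmall : ∀ i, ∀ e ∈ M', c i e ≤ d i := fun i e he => hsmall i e he
  have roundA : ∀ (R : Finset ι), (∀ i, ∀ e ∈ R, 0 ≤ c i e) → (∀ i, ∀ e ∈ R, c i e ≤ d i) →
      ∀ (x : ι → ℝ), (∀ e ∈ R, 0 ≤ x e) → (∀ e ∈ R, x e ≤ 1) →
      ∃ B ⊆ R, ∀ i,
        (∑ e ∈ R, x e * c i e) - (k + 1 : ℕ) * d i ≤ ∑ e ∈ B, c i e ∧
        ∑ e ∈ B, c i e ≤ ∑ e ∈ R, x e * c i e := by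
    intro R hcR hdR x hx0 hx1
    exact roundingA (k + 1) R c d hd0 hcR hdR _ x hx0 hx1 le_rfl
  obtain ⟨S, hdis, hun, hbd⟩ := splitB (k + 1) c d hd0 roundA k M' hc hdsmall
  refine ⟨S, hdis, hun, fun i j => ?_⟩
  have hb := hbd i j
  set T : ℝ := ∑ f ∈ M', c i f with hT
  have htR : (0:ℝ) < (k:ℝ) + 1 := by positivity
  have hkey : ((k:ℝ) + 1) * (((k:ℝ) + 1) + 1) ≤ D := by
    have hkn : ((k:ℝ) + 1) ≤ (n:ℝ) := by exact_mod_cast htn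
    rw [hD]; nlinarith
  have h2 : (T * (((k:ℝ) + 1) + 1)) / D ≤ T / ((k:ℝ) + 1) := by
    rw [div_le_div_iff₀ hDpos htR]
    nlinarith [mul_le_mul_of_nonneg_left hkey (hT0 i)]
  have h3 : T / D + (((k:ℝ)+1)) * (T / D) = (T * (((k:ℝ) + 1) + 1)) / D := by ring
  have h4 : ((k + 1 : ℕ) : ℝ) = (k:ℝ) + 1 := by push_cast; ring
  have hdi : d i = T / D := rfl
  rw [hdi, h4] at hb
  linarith
end

section
/- Let there be 3 agents and a finite set M of indivisible chores with additive bi-valued cost functions taking values in {ε, 1} for some 0 ≤ ε < 1. If two of the three agents have identical cost functions (c_i(e) = c_j(e) for all items e, for some i ≠ j), then there exists an EFX allocation. -/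
/-!
Greedy allocation for the two agents with the common cost function: take the chores in order of
decreasing cost and put each one into a currently cheapest bundle. The chore just added is the
cheapest of its bundle, so removing any chore from that bundle costs at most the bundle's previous
cost, which was minimal; hence the three bundles are EFX for the common cost, whoever holds which.
The third agent then picks a bundle that is cheapest for it, and the other two take the rest.
-/

open Finset Function

section

variable {ι κ : Type*} [DecidableEq ι]

def EFXFor (c : ι → ℝ) (X : κ → Finset ι) (i : κ) : Prop :=
  ∀ j, ∀ e ∈ X i, ∑ f ∈ (X i).erase e, c f ≤ ∑ f ∈ X j, c f

def IsAllocation [Fintype κ] (M : Finset ι) (X : κ → Finset ι) : Prop :=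
  Pairwise (Disjoint on X) ∧ univ.biUnion X = M

section Allocation

variable [Fintype κ] {M : Finset ι} {X : κ → Finset ι}

theorem IsAllocation.subset (hX : IsAllocation M X) (t : κ) : X t ⊆ M :=
  hX.2 ▸ subset_biUnion_of_mem X (mem_univ t)

theorem IsAllocation.comp_equiv (hX : IsAllocation M X) (σ : κ ≃ κ) :
    IsAllocation M (X ∘ σ) :=
  ⟨fun _ _ h => hX.1 (σ.injective.ne h), by
    rw [← hX.2]
    ext e
    simp only [mem_biUnion, mem_univ, true_and, comp_apply]
    exact (σ.surjective.exists (p := fun t => e ∈ X t)).symm⟩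

theorem IsAllocation.update_insert [DecidableEq κ] (hX : IsAllocation M X) {a : ι} (ha : a ∉ M)
    (m : κ) : IsAllocation (insert a M) (update X m (insert a (X m))) := by
  have haX : ∀ t, a ∉ X t := fun t h => ha (hX.subset t h)
  refine ⟨fun x y hxy => ?_, ?_⟩
  · by_cases hx : x = m <;> by_cases hy : y = m
    · exact absurd (hx.trans hy.symm) hxy
    · subst hx; simpa [onFun, hy, haX y] using hX.1 hxy
    · subst hy; simpa [onFun, hx, haX x] using hX.1 hxy
    · simpa [onFun, hx, hy] using hX.1 hxy
  · rw [← hX.2]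
    ext e
    simp only [mem_biUnion, mem_univ, true_and, mem_insert, update_apply]
    constructor
    · rintro ⟨t, ht⟩
      split_ifs at ht with htm
      · exact (mem_insert.1 ht).imp_right fun h => ⟨t, htm ▸ h⟩
      · exact Or.inr ⟨t, ht⟩
    · rintro (rfl | ⟨t, ht⟩)
      · exact ⟨m, by simp⟩
      · refine ⟨t, ?_⟩
        split_ifs with htm
        · exact mem_insert_of_mem (htm ▸ ht)
        · exact ht

end Allocation

section EFX

variable {c c' : ι → ℝ} {X : κ → Finset ι} {i : κ}

theorem efxFor_of_forall_sum_le (hc : ∀ e ∈ X i, 0 ≤ c e)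
    (hmin : ∀ j, ∑ f ∈ X i, c f ≤ ∑ f ∈ X j, c f) : EFXFor c X i := fun j e _ =>
  (sum_le_sum_of_subset_of_nonneg (erase_subset e _) fun f hf _ => hc f hf).trans (hmin j)

theorem EFXFor.comp_equiv (σ : κ ≃ κ) (h : EFXFor c X (σ i)) : EFXFor c (X ∘ σ) i :=
  fun j => h (σ j)

theorem EFXFor.congr_cost {M : Finset ι} (hX : ∀ j, X j ⊆ M) (hcc' : ∀ e ∈ M, c e = c' e)
    (h : EFXFor c X i) : EFXFor c' X i := by
  intro j e he
  rw [sum_congr rfl fun f hf => (hcc' f (hX i (mem_of_mem_erase hf))).symm,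
    sum_congr rfl fun f hf => (hcc' f (hX j hf)).symm]
  exact h j e he

end EFX

theorem sum_erase_insert_le {c : ι → ℝ} {s : Finset ι} {a e : ι} (ha : a ∉ s)
    (he : e ∈ insert a s) (hae : c a ≤ c e) :
    ∑ f ∈ (insert a s).erase e, c f ≤ ∑ f ∈ s, c f := by
  have := sum_erase_add _ c he
  rw [sum_insert ha] at this
  linarith

theorem EFXFor.update_insert [DecidableEq κ] {c : ι → ℝ} {X : κ → Finset ι} {a : ι}
    {m : κ} (hefx : ∀ t, EFXFor c X t)
    (hm : ∀ t, ∑ f ∈ X m, c f ≤ ∑ f ∈ X t, c f)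
    (ha : ∀ t, a ∉ X t) (ha0 : 0 ≤ c a) (hmin : ∀ t, ∀ x ∈ X t, c a ≤ c x) (t : κ) :
    EFXFor c (update X m (insert a (X m))) t := by
  have hgrow : ∀ b, ∑ f ∈ X b, c f ≤ ∑ f ∈ update X m (insert a (X m)) b, c f := by
    intro b
    by_cases hbm : b = m
    · subst hbm
      rw [update_self, sum_insert (ha b)]
      linarith
    · rw [update_of_ne hbm]
  intro b e he
  by_cases htm : t = m
  · subst htm
    rw [update_self] at he ⊢
    have hae : c a ≤ c e := by
      rcases mem_insert.1 he with rfl | he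
      exacts [le_rfl, hmin t e he]
    calc ∑ f ∈ (insert a (X t)).erase e, c f ≤ ∑ f ∈ X t, c f :=
          sum_erase_insert_le (ha t) he hae
      _ ≤ ∑ f ∈ X b, c f := hm b
      _ ≤ _ := hgrow b
  · rw [update_of_ne htm] at he ⊢
    exact (hefx t b e he).trans (hgrow b)

theorem exists_isAllocation_forall_efxFor [Fintype κ] [Nonempty κ] [DecidableEq κ]
    (c : ι → ℝ) (M : Finset ι) (hc : ∀ e ∈ M, 0 ≤ c e) :
    ∃ P : κ → Finset ι, IsAllocation M P ∧ ∀ t, EFXFor c P t := by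
  induction M using Finset.induction_on_min_value c with
  | empty =>
    exact ⟨fun _ => ∅, ⟨fun _ _ _ => disjoint_empty_left _,
      subset_empty.1 (biUnion_subset.2 fun _ _ => subset_rfl)⟩,
      fun _ _ _ he => absurd he (notMem_empty _)⟩
  | insert a s ha hmin ih =>
    obtain ⟨P, hP, hefx⟩ := ih fun e he => hc e (mem_insert_of_mem he)
    obtain ⟨m, -, hm⟩ := exists_min_image univ (fun t => ∑ f ∈ P t, c f) univ_nonempty
    exact ⟨_, hP.update_insert ha m, EFXFor.update_insert hefx (fun t => hm t (mem_univ t))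
      (fun t h => ha (hP.subset t h)) (hc a (mem_insert_self a s))
      (fun t x hx => hmin x (hP.subset t hx))⟩

theorem Fin.exists_forall_eq_or_eq_or_eq_of_ne {i j : Fin 3} (hij : i ≠ j) :
    ∃ k, ∀ a, a = i ∨ a = j ∨ a = k := by
  revert i j
  decide

end

theorem stmt_13_general {ι : Type*} [DecidableEq ι] (M : Finset ι)
    (c : Fin 3 → ι → ℝ) (ε : ℝ) (hε0 : 0 ≤ ε)
    (hbi : ∀ i, ∀ e ∈ M, c i e = ε ∨ c i e = 1)
    (hsame : ∃ i j : Fin 3, i ≠ j ∧ ∀ e ∈ M, c i e = c j e) :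
    ∃ X : Fin 3 → Finset ι,
      (∀ i j, i ≠ j → Disjoint (X i) (X j)) ∧
      (Finset.univ.biUnion X = M) ∧
      (∀ i j : Fin 3, ∀ e ∈ X i,
        ∑ f ∈ (X i).erase e, c i f ≤ ∑ f ∈ X j, c i f) := by
  obtain ⟨i, j, hij, hsame⟩ := hsame
  obtain ⟨k, hcover⟩ := Fin.exists_forall_eq_or_eq_or_eq_of_ne hij
  have hnonneg : ∀ a, ∀ e ∈ M, 0 ≤ c a e := fun a e he =>
    (hbi a e he).elim (· ▸ hε0) (· ▸ zero_le_one)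
  obtain ⟨P, hP, hefx⟩ := exists_isAllocation_forall_efxFor (κ := Fin 3) (c i) M (hnonneg i)
  obtain ⟨m, -, hm⟩ := exists_min_image univ (fun t => ∑ f ∈ P t, c k f) univ_nonempty
  let σ := Equiv.swap k m
  obtain ⟨hdisj, hunion⟩ := hP.comp_equiv σ
  refine ⟨P ∘ σ, fun a b hab => hdisj hab, hunion, fun a => ?_⟩
  change EFXFor (c a) (P ∘ σ) a
  rcases hcover a with rfl | rfl | rfl
  · exact (hefx _).comp_equiv σ
  · exact ((hefx _).congr_cost hP.subset hsame).comp_equiv σ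
  · refine EFXFor.comp_equiv σ ?_
    rw [Equiv.swap_apply_left]
    exact efxFor_of_forall_sum_le (fun e he => hnonneg a e (hP.subset m he))
      fun t => hm t (mem_univ t)

/-- 3 agents with additive bi-valued cost functions taking values in `{ε, 1}` with
`0 ≤ ε < 1`.  If two of the three agents have identical cost functions, then there
exists an EFX allocation. -/
theorem stmt_13 {ι : Type*} [DecidableEq ι] (M : Finset ι)
    (c : Fin 3 → ι → ℝ) (ε : ℝ) (hε0 : 0 ≤ ε) (hε1 : ε < 1)
    (hbi : ∀ i, ∀ e ∈ M, c i e = ε ∨ c i e = 1)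
    (hsame : ∃ i j : Fin 3, i ≠ j ∧ ∀ e ∈ M, c i e = c j e) :
    ∃ X : Fin 3 → Finset ι,
      (∀ i j, i ≠ j → Disjoint (X i) (X j)) ∧
      (Finset.univ.biUnion X = M) ∧
      (∀ i j : Fin 3, ∀ e ∈ X i,
        ∑ f ∈ (X i).erase e, c i f ≤ ∑ f ∈ X j, c i f) :=
  stmt_13_general M c ε hε0 hbi hsame
end
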